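/- arXiv:1107.0524 — 8 statements merged into one kernel-verified Lean document; each statement's English description precedes it below -/
import Mathlib

section
/- (Local discrete upper bound, abstract form of the first inequality of Lemma 3.1 for zero order operators.) Let S ⊆ S′ be closed subspaces of H = L²(X, μ), and let E ⊆ X be a measurable set such that for every e ∈ S′, the function e − P_S e vanishes μ-almost everywhere outside E, where P_S is the orthogonal projection onto S. Let u_S and u_{S′} be the Galerkin approximations from S and S′ of the solution of Au = f. Then α ‖u_S − u_{S′}‖ ≤ ‖r_S‖_E, where r_S = f − A u_S. -/
/-
The error `e = u_{S'} - u_S` lies in `S'`, and by Galerkin orthogonality of `r_S` to `S`,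
coercivity gives `α ‖e‖² ≤ ⟪A e, e⟫ = ⟪r_S, e⟫ = ⟪r_S, e - P_S e⟫`. The locality hypothesis
says that `e - P_S e` lives on `E`, so `r_S` may be replaced by `1_E r_S` in this pairing, and
Cauchy–Schwarz together with `‖e - P_S e‖ ≤ ‖e‖` yields `α ‖e‖ ≤ ‖1_E r_S‖ = ‖r_S‖_E`.
-/

open MeasureTheory
open scoped RealInnerProductSpace ENNReal

namespace Submodule

variable {𝕜 E : Type*} [RCLike 𝕜] [NormedAddCommGroup E] [InnerProductSpace 𝕜 E]

theorem norm_sub_starProjection_apply_le (K : Submodule 𝕜 E) [K.HasOrthogonalProjection]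
    (v : E) : ‖v - K.starProjection v‖ ≤ ‖v‖ := by
  simpa [starProjection_orthogonal] using Kᗮ.norm_starProjection_apply_le v

end Submodule

section Galerkin

variable {H : Type*} [NormedAddCommGroup H] [InnerProductSpace ℝ H]
  {A : H →L[ℝ] H} {α : ℝ} {f uS uS' : H} {S S' : Submodule ℝ H}

theorem inner_residual_eq_zero_of_galerkin (hGal : ∀ v ∈ S, ⟪A uS, v⟫ = ⟪f, v⟫)
    {v : H} (hv : v ∈ S) : ⟪f - A uS, v⟫ = 0 := by
  rw [inner_sub_left, hGal v hv, sub_self]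

theorem coercive_mul_norm_sq_le_inner_residual (hcoer : ∀ v : H, α * ‖v‖ ^ 2 ≤ ⟪A v, v⟫)
    (huS : uS ∈ S') (huS' : uS' ∈ S') (hGal' : ∀ v ∈ S', ⟪A uS', v⟫ = ⟪f, v⟫) :
    α * ‖uS' - uS‖ ^ 2 ≤ ⟪f - A uS, uS' - uS⟫ :=
  calc α * ‖uS' - uS‖ ^ 2 ≤ ⟪A (uS' - uS), uS' - uS⟫ := hcoer _
    _ = ⟪f - A uS, uS' - uS⟫ := by
      rw [map_sub, inner_sub_left, hGal' _ (S'.sub_mem huS' huS), inner_sub_left]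

theorem mul_norm_galerkin_sub_le [S.HasOrthogonalProjection]
    (hcoer : ∀ v : H, α * ‖v‖ ^ 2 ≤ ⟪A v, v⟫) (hSS' : S ≤ S') (huS : uS ∈ S) (huS' : uS' ∈ S')
    (hGal : ∀ v ∈ S, ⟪A uS, v⟫ = ⟪f, v⟫) (hGal' : ∀ v ∈ S', ⟪A uS', v⟫ = ⟪f, v⟫) {g : H}
    (hg : ∀ e ∈ S', ⟪f - A uS, e - S.starProjection e⟫ = ⟪g, e - S.starProjection e⟫) :
    α * ‖uS - uS'‖ ≤ ‖g‖ := by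
  set e := uS' - uS
  have he : e ∈ S' := S'.sub_mem huS' (hSS' huS)
  have key : α * ‖e‖ * ‖e‖ ≤ ‖g‖ * ‖e‖ :=
    calc α * ‖e‖ * ‖e‖ = α * ‖e‖ ^ 2 := by ring
      _ ≤ ⟪f - A uS, e⟫ := coercive_mul_norm_sq_le_inner_residual hcoer (hSS' huS) huS' hGal'
      _ = ⟪f - A uS, e - S.starProjection e⟫ := by
        rw [inner_sub_right _ e, inner_residual_eq_zero_of_galerkin hGal (S.starProjection_apply_mem e),
          sub_zero]
      _ = ⟪g, e - S.starProjection e⟫ := hg e he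
      _ ≤ ‖g‖ * ‖e - S.starProjection e‖ := real_inner_le_norm _ _
      _ ≤ ‖g‖ * ‖e‖ := by gcongr; exact S.norm_sub_starProjection_apply_le e
  rw [norm_sub_rev]
  rcases (norm_nonneg e).eq_or_lt with he0 | he0
  · rw [← he0, mul_zero]
    exact norm_nonneg g
  · exact le_of_mul_le_mul_right key he0

end Galerkin

namespace MeasureTheory

variable {X : Type*} [MeasurableSpace X] {μ : Measure X} {E : Set X}

noncomputable def indicatorLp {F : Type*} [NormedAddCommGroup F] {p : ℝ≥0∞}
    (hE : MeasurableSet E) (g : Lp F p μ) : Lp F p μ :=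
  ((Lp.memLp g).indicator hE).toLp _

theorem coeFn_indicatorLp {F : Type*} [NormedAddCommGroup F] {p : ℝ≥0∞}
    (hE : MeasurableSet E) (g : Lp F p μ) : indicatorLp hE g =ᵐ[μ] E.indicator g :=
  MemLp.coeFn_toLp _

theorem inner_indicatorLp_of_ae_eq_zero (hE : MeasurableSet E) (g : Lp ℝ 2 μ) {w : Lp ℝ 2 μ}
    (hw : ∀ᵐ x ∂μ, x ∉ E → w x = 0) : ⟪indicatorLp hE g, w⟫ = ⟪g, w⟫ := by
  rw [L2.inner_def, L2.inner_def]
  refine integral_congr_ae ?_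
  filter_upwards [coeFn_indicatorLp hE g, hw] with x hgx hwx
  by_cases hx : x ∈ E
  · simp [hgx, hx]
  · simp [hwx hx]

theorem norm_indicatorLp_eq_sqrt_setIntegral (hE : MeasurableSet E) (g : Lp ℝ 2 μ) :
    ‖indicatorLp hE g‖ = √(∫ x in E, g x ^ 2 ∂μ) := by
  have hsq : ⟪indicatorLp hE g, indicatorLp hE g⟫ = ∫ x in E, g x ^ 2 ∂μ := by
    rw [L2.inner_def, ← integral_indicator hE]
    refine integral_congr_ae ?_
    filter_upwards [coeFn_indicatorLp hE g] with x hgx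
    by_cases hx : x ∈ E <;> simp [hgx, hx, sq]
  rw [← hsq, real_inner_self_eq_norm_sq, Real.sqrt_sq (norm_nonneg _)]

end MeasureTheory

theorem local_discrete_upper_bound_zero_order_general
    {X : Type*} [MeasurableSpace X] (μ : Measure X)
    (A : Lp ℝ 2 μ →L[ℝ] Lp ℝ 2 μ) (α : ℝ)
    (hcoer : ∀ v : Lp ℝ 2 μ, α * ‖v‖ ^ 2 ≤ ⟪A v, v⟫)
    (f : Lp ℝ 2 μ)
    (S S' : Submodule ℝ (Lp ℝ 2 μ)) [CompleteSpace S] (hSS' : S ≤ S')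
    (E : Set X) (hE : MeasurableSet E)
    (hloc : ∀ e : Lp ℝ 2 μ, e ∈ S' →
      ∀ᵐ x ∂μ, x ∉ E → (e - ((Submodule.orthogonalProjectionOnto S e : S) : Lp ℝ 2 μ)) x = 0)
    (uS uS' : Lp ℝ 2 μ) (huS : uS ∈ S) (huS' : uS' ∈ S')
    (hGalS : ∀ v ∈ S, ⟪A uS, v⟫ = ⟪f, v⟫)
    (hGalS' : ∀ v ∈ S', ⟪A uS', v⟫ = ⟪f, v⟫) :
    α * ‖uS - uS'‖ ≤ Real.sqrt (∫ x in E, ((f - A uS : Lp ℝ 2 μ) x) ^ 2 ∂μ) := by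
  rw [← norm_indicatorLp_eq_sqrt_setIntegral hE]
  exact mul_norm_galerkin_sub_le hcoer hSS' huS huS' hGalS hGalS' fun e he =>
    (inner_indicatorLp_of_ae_eq_zero hE _ (hloc e he)).symm

/-- Local discrete upper bound (abstract form of the first inequality of Lemma 3.1
for zero order operators): if every `e ∈ S'` satisfies `e - P_S e = 0` a.e. outside `E`,
then `α ‖u_S − u_{S'}‖ ≤ ‖r_S‖_E`, where `r_S = f − A u_S` and
`‖g‖_E = (∫_E g² dμ)^{1/2}`. -/
theorem local_discrete_upper_bound_zero_order
    {X : Type*} [MeasurableSpace X] (μ : Measure X)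
    (A : Lp ℝ 2 μ →L[ℝ] Lp ℝ 2 μ) (α β : ℝ) (hα : 0 < α) (hαβ : α ≤ β)
    (hsym : ∀ v w : Lp ℝ 2 μ, ⟪A v, w⟫ = ⟪v, A w⟫)
    (hcoer : ∀ v : Lp ℝ 2 μ, α * ‖v‖ ^ 2 ≤ ⟪A v, v⟫)
    (hbdd : ∀ v : Lp ℝ 2 μ, ‖A v‖ ≤ β * ‖v‖)
    (f u : Lp ℝ 2 μ) (hu : A u = f)
    (S S' : Submodule ℝ (Lp ℝ 2 μ)) [CompleteSpace S] [CompleteSpace S'] (hSS' : S ≤ S')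
    (E : Set X) (hE : MeasurableSet E)
    (hloc : ∀ e : Lp ℝ 2 μ, e ∈ S' →
      ∀ᵐ x ∂μ, x ∉ E → (e - ((Submodule.orthogonalProjectionOnto S e : S) : Lp ℝ 2 μ)) x = 0)
    (uS uS' : Lp ℝ 2 μ) (huS : uS ∈ S) (huS' : uS' ∈ S')
    (hGalS : ∀ v ∈ S, ⟪A uS, v⟫ = ⟪f, v⟫)
    (hGalS' : ∀ v ∈ S', ⟪A uS', v⟫ = ⟪f, v⟫) :
    α * ‖uS - uS'‖ ≤ Real.sqrt (∫ x in E, ((f - A uS : Lp ℝ 2 μ) x) ^ 2 ∂μ) :=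
  local_discrete_upper_bound_zero_order_general μ A α hcoer f S S' hSS' E hE hloc uS uS' huS huS'
    hGalS hGalS'
end

section
/- (Local discrete lower bound, abstract form of the second inequality of Lemma 3.1 for zero order operators.) Let S ⊆ S′ be closed subspaces of H = L²(X, μ) and E ⊆ X a measurable set. Let u_S and u_{S′} be the Galerkin approximations from S and S′ of the solution of Au = f, and r_S = f − A u_S. Then for every v ∈ S′ that vanishes μ-almost everywhere outside E, one has ‖r_S‖_E ≤ β ‖u_S − u_{S′}‖ + 2 ‖r_S − v‖_E. -/
/-!
Restrict to `L²(E)`. Writing `R` and `V` for the restrictions of `r_S` and `v`, the support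
condition on `v` gives `⟪r_S, v⟫ = ⟪R, V⟫` and `‖v‖ = ‖V‖`, while Galerkin orthogonality on `S'`
gives `⟪r_S, v⟫ = ⟪A (u_{S'} - u_S), v⟫ ≤ β ‖u_S - u_{S'}‖ ‖V‖`. The bound then follows from
`‖R‖² = ⟪R, V⟫ + ⟪R, R - V⟫` and `‖V‖ ≤ ‖R‖ + ‖R - V‖`.
-/

open MeasureTheory
open scoped RealInnerProductSpace

theorem norm_le_add_two_mul_norm_sub_of_inner_le {F : Type*} [NormedAddCommGroup F]
    [InnerProductSpace ℝ F] {R V : F} {c : ℝ} (hc : 0 ≤ c) (h : ⟪R, V⟫ ≤ c * ‖V‖) :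
    ‖R‖ ≤ c + 2 * ‖R - V‖ := by
  have hV : ‖V‖ ≤ ‖R‖ + ‖R - V‖ := norm_le_norm_add_norm_sub R V
  have hsq : ‖R‖ ^ 2 = ⟪R, V⟫ + ⟪R, R - V⟫ := by
    rw [← inner_add_right, add_sub_cancel, real_inner_self_eq_norm_sq]
  have hcs : ⟪R, R - V⟫ ≤ ‖R‖ * ‖R - V‖ := real_inner_le_norm R (R - V)
  have hRV := norm_nonneg (R - V)
  rcases le_or_gt ‖R‖ c with hRc | hRc
  · linarith
  · nlinarith [mul_le_mul_of_nonneg_left hV hc]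

section Restrict

variable {X : Type*} [MeasurableSpace X] {μ : Measure X} {E : Set X}

local notation "restrictL²" => LpToLpRestrictCLM X ℝ ℝ μ 2 E

theorem inner_LpToLpRestrictCLM (g h : Lp ℝ 2 μ) :
    ⟪restrictL² g, restrictL² h⟫ = ∫ x in E, g x * h x ∂μ := by
  rw [L2.inner_def]
  refine integral_congr_ae ?_
  filter_upwards [LpToLpRestrictCLM_coeFn ℝ E g, LpToLpRestrictCLM_coeFn ℝ E h] with x hg hh
  simp [hg, hh, mul_comm]

theorem sqrt_setIntegral_sq_eq_norm_LpToLpRestrictCLM (g : Lp ℝ 2 μ) :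
    √(∫ x in E, g x ^ 2 ∂μ) = ‖restrictL² g‖ := by
  simp only [norm_eq_sqrt_real_inner, inner_LpToLpRestrictCLM, sq]

theorem inner_LpToLpRestrictCLM_of_ae_notMem_eq_zero (g : Lp ℝ 2 μ) {h : Lp ℝ 2 μ}
    (hh : ∀ᵐ x ∂μ, x ∉ E → h x = 0) : ⟪restrictL² g, restrictL² h⟫ = ⟪g, h⟫ := by
  rw [inner_LpToLpRestrictCLM, setIntegral_eq_integral_of_ae_compl_eq_zero, L2.inner_def]
  · simp only [RCLike.inner_apply, conj_trivial, mul_comm]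
  · filter_upwards [hh] with x hx hxE
    simp [hx hxE]

theorem norm_LpToLpRestrictCLM_of_ae_notMem_eq_zero {h : Lp ℝ 2 μ}
    (hh : ∀ᵐ x ∂μ, x ∉ E → h x = 0) : ‖restrictL² h‖ = ‖h‖ := by
  rw [norm_eq_sqrt_real_inner, norm_eq_sqrt_real_inner,
    inner_LpToLpRestrictCLM_of_ae_notMem_eq_zero h hh]

end Restrict

theorem local_discrete_lower_bound_zero_order_general
    {X : Type*} [MeasurableSpace X] (μ : Measure X)
    (A : Lp ℝ 2 μ →L[ℝ] Lp ℝ 2 μ) (β : ℝ)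
    (hbdd : ∀ v : Lp ℝ 2 μ, ‖A v‖ ≤ β * ‖v‖)
    (f : Lp ℝ 2 μ)
    (S' : Submodule ℝ (Lp ℝ 2 μ))
    (E : Set X)
    (uS uS' : Lp ℝ 2 μ)
    (hGalS' : ∀ v ∈ S', ⟪A uS', v⟫ = ⟪f, v⟫) :
    ∀ v : Lp ℝ 2 μ, v ∈ S' → (∀ᵐ x ∂μ, x ∉ E → v x = 0) →
      Real.sqrt (∫ x in E, ((f - A uS : Lp ℝ 2 μ) x) ^ 2 ∂μ) ≤
        β * ‖uS - uS'‖ +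
          2 * Real.sqrt (∫ x in E, ((f - A uS - v : Lp ℝ 2 μ) x) ^ 2 ∂μ) := by
  intro v hv hvE
  have hGal : ⟪f - A uS, v⟫ = ⟪A (uS' - uS), v⟫ := by
    rw [inner_sub_left, map_sub, inner_sub_left, hGalS' v hv]
  have hbound : ⟪A (uS' - uS), v⟫ ≤ β * ‖uS - uS'‖ * ‖v‖ := by
    rw [norm_sub_rev]
    exact (real_inner_le_norm _ _).trans (mul_le_mul_of_nonneg_right (hbdd _) (norm_nonneg v))
  have hc : 0 ≤ β * ‖uS - uS'‖ := (norm_nonneg _).trans (hbdd _)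
  rw [sqrt_setIntegral_sq_eq_norm_LpToLpRestrictCLM, sqrt_setIntegral_sq_eq_norm_LpToLpRestrictCLM,
    map_sub _ (f - A uS) v]
  refine norm_le_add_two_mul_norm_sub_of_inner_le hc ?_
  rw [inner_LpToLpRestrictCLM_of_ae_notMem_eq_zero _ hvE,
    norm_LpToLpRestrictCLM_of_ae_notMem_eq_zero hvE, hGal]
  exact hbound

/-- Local discrete lower bound (abstract form of the second inequality of Lemma 3.1
for zero order operators): for every `v ∈ S'` vanishing a.e. outside `E`,
`‖r_S‖_E ≤ β ‖u_S − u_{S'}‖ + 2 ‖r_S − v‖_E`, where `r_S = f − A u_S`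
and `‖g‖_E = (∫_E g² dμ)^{1/2}`. -/
theorem local_discrete_lower_bound_zero_order
    {X : Type*} [MeasurableSpace X] (μ : Measure X)
    (A : Lp ℝ 2 μ →L[ℝ] Lp ℝ 2 μ) (α β : ℝ) (hα : 0 < α) (hαβ : α ≤ β)
    (hsym : ∀ v w : Lp ℝ 2 μ, ⟪A v, w⟫ = ⟪v, A w⟫)
    (hcoer : ∀ v : Lp ℝ 2 μ, α * ‖v‖ ^ 2 ≤ ⟪A v, v⟫)
    (hbdd : ∀ v : Lp ℝ 2 μ, ‖A v‖ ≤ β * ‖v‖)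
    (f u : Lp ℝ 2 μ) (hu : A u = f)
    (S S' : Submodule ℝ (Lp ℝ 2 μ)) [CompleteSpace S] [CompleteSpace S'] (hSS' : S ≤ S')
    (E : Set X) (hE : MeasurableSet E)
    (uS uS' : Lp ℝ 2 μ) (huS : uS ∈ S) (huS' : uS' ∈ S')
    (hGalS : ∀ v ∈ S, ⟪A uS, v⟫ = ⟪f, v⟫)
    (hGalS' : ∀ v ∈ S', ⟪A uS', v⟫ = ⟪f, v⟫) :
    ∀ v : Lp ℝ 2 μ, v ∈ S' → (∀ᵐ x ∂μ, x ∉ E → v x = 0) →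
      Real.sqrt (∫ x in E, ((f - A uS : Lp ℝ 2 μ) x) ^ 2 ∂μ) ≤
        β * ‖uS - uS'‖ +
          2 * Real.sqrt (∫ x in E, ((f - A uS - v : Lp ℝ 2 μ) x) ^ 2 ∂μ) :=
  local_discrete_lower_bound_zero_order_general μ A β hbdd f S' E uS uS' hGalS'
end

section
/- (Quasi-optimality of the total error; abstract form of Lemma 3.2(a).) Let W be a normed space, g ∈ W, and let L : H → W be a linear map satisfying ‖L v − L w‖_W² ≤ C_A |||v − w|||² for all v, w ∈ S, where C_A ≥ 0. For v ∈ S define osc(v) = ‖g − L v‖_W. Let u solve Au = f and u_S be the Galerkin approximation from the closed subspace S. Then for every v ∈ S: |||u − u_S|||² + osc(u_S)² ≤ 4(1 + C_A) ( |||u − v|||² + osc(v)² ). -/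
open scoped RealInnerProductSpace

/-- Quasi-optimality of the total error (abstract form of Lemma 3.2(a)):
if `‖L v − L w‖² ≤ C_A |||v − w|||²` on `S`, then with `osc(v) = ‖g − L v‖`,
`|||u − u_S|||² + osc(u_S)² ≤ 4(1 + C_A)(|||u − v|||² + osc(v)²)` for every `v ∈ S`,
where `|||w|||² = ⟪A w, w⟫` is the squared energy norm. -/
theorem total_error_quasi_optimality
    {H W : Type*} [NormedAddCommGroup H] [InnerProductSpace ℝ H] [CompleteSpace H]
    [NormedAddCommGroup W] [NormedSpace ℝ W]
    (A : H →L[ℝ] H) (α β : ℝ) (hα : 0 < α) (hαβ : α ≤ β)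
    (hsym : ∀ v w : H, ⟪A v, w⟫ = ⟪v, A w⟫)
    (hcoer : ∀ v : H, α * ‖v‖ ^ 2 ≤ ⟪A v, v⟫)
    (hbdd : ∀ v : H, ‖A v‖ ≤ β * ‖v‖)
    (f u : H) (hu : A u = f)
    (S : Submodule ℝ H) (hS : IsClosed (S : Set H))
    (uS : H) (huS : uS ∈ S)
    (hGal : ∀ v ∈ S, ⟪A uS, v⟫ = ⟪f, v⟫)
    (g : W) (L : H →ₗ[ℝ] W) (CA : ℝ) (hCA : 0 ≤ CA)
    (hL : ∀ v ∈ S, ∀ w ∈ S, ‖L v - L w‖ ^ 2 ≤ CA * ⟪A (v - w), v - w⟫) :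
    ∀ v ∈ S,
      ⟪A (u - uS), u - uS⟫ + ‖g - L uS‖ ^ 2 ≤
        4 * (1 + CA) * (⟪A (u - v), u - v⟫ + ‖g - L v‖ ^ 2) := by
  intro v hv
  have hbS : uS - v ∈ S := S.sub_mem huS hv
  -- Galerkin orthogonality
  have horth : ⟪A (u - uS), uS - v⟫ = 0 := by
    have h1 : ⟪A u, uS - v⟫ = ⟪f, uS - v⟫ := by rw [hu]
    have h2 : ⟪A uS, uS - v⟫ = ⟪f, uS - v⟫ := hGal _ hbS
    have : A (u - uS) = A u - A uS := map_sub A u uS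
    rw [this, inner_sub_left, h1, h2, sub_self]
  -- Pythagoras
  have hpy : ⟪A (u - v), u - v⟫ =
      ⟪A (u - uS), u - uS⟫ + ⟪A (uS - v), uS - v⟫ := by
    have hdecomp : u - v = (u - uS) + (uS - v) := by abel
    have hcross : ⟪A (uS - v), u - uS⟫ = ⟪A (u - uS), uS - v⟫ := by
      rw [hsym, real_inner_comm]
    rw [hdecomp, map_add, inner_add_left, inner_add_right, inner_add_right,
      hcross, horth]
    ring
  have hnn : ∀ w : H, 0 ≤ ⟪A w, w⟫ := fun w =>
    le_trans (by positivity) (hcoer w)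
  have hE := hnn (u - uS)
  have hd := hnn (uS - v)
  have hs2 : ‖L v - L uS‖ ^ 2 ≤ CA * ⟪A (uS - v), uS - v⟫ := by
    have h0 := hL v hv uS huS
    have hneg : ⟪A (v - uS), v - uS⟫ = ⟪A (uS - v), uS - v⟫ := by
      have : v - uS = -(uS - v) := by abel
      rw [this, map_neg, inner_neg_neg]
    rwa [hneg] at h0
  have htri : ‖g - L uS‖ ≤ ‖g - L v‖ + ‖L v - L uS‖ := by
    have := norm_add_le (g - L v) (L v - L uS)
    have heq : (g - L v) + (L v - L uS) = g - L uS := by abel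
    rwa [heq] at this
  have hn1 : (0:ℝ) ≤ ‖g - L uS‖ := norm_nonneg _
  have hn2 : (0:ℝ) ≤ ‖g - L v‖ := norm_nonneg _
  have hn3 : (0:ℝ) ≤ ‖L v - L uS‖ := norm_nonneg _
  nlinarith [sq_nonneg (‖g - L v‖ - ‖L v - L uS‖), mul_nonneg hCA hd,
    mul_nonneg hCA hE, sq_nonneg (‖g - L v‖ + ‖L v - L uS‖),
    mul_nonneg hn1 hn2, mul_nonneg (mul_nonneg hCA hCA) hd]
end

section
/- (Arithmetic core of Lemma 3.2(c): error reduction implies the Dörfler property.) Let 0 < α ≤ β be real numbers with α ≤ β² and α² ≤ (1 + 2C_A)β, let C_A ≥ 0 and μ ∈ (0, 1/2). Let E, E′, D, O, O′, O*, R, R* be nonnegative real numbers satisfying: (i) E² = E′² + D²; (ii) O² − O*² ≤ 2O′² + 2C_A D²; (iii) D² ≤ (β/α²) R*²; (iv) R² ≤ (β²/α) E²; (v) E′² + O′² ≤ μ (E² + O²). Then R*² + O*² ≥ θ (R² + O²), where θ = α³(1 − 2μ) / (β³(1 + 2C_A)). -/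
/-- Arithmetic core of Lemma 3.2(c): error reduction implies the Dörfler property.
Under (i) Galerkin orthogonality, (ii) the oscillation estimate, (iii) the local discrete
upper bound, (iv) the global lower bound and (v) the assumed error reduction, one has
`R*² + O*² ≥ θ (R² + O²)` with `θ = α³(1 − 2μ)/(β³(1 + 2C_A))`. -/
theorem error_reduction_implies_dorfler
    (α β CA μ : ℝ) (hα : 0 < α) (hαβ : α ≤ β)
    (hαβ2 : α ≤ β ^ 2) (hα2β : α ^ 2 ≤ (1 + 2 * CA) * β)
    (hCA : 0 ≤ CA) (hμ : μ ∈ Set.Ioo (0 : ℝ) (1 / 2))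
    (E E' D O O' Os R Rs : ℝ)
    (hE : 0 ≤ E) (hE' : 0 ≤ E') (hD : 0 ≤ D) (hO : 0 ≤ O) (hO' : 0 ≤ O')
    (hOs : 0 ≤ Os) (hR : 0 ≤ R) (hRs : 0 ≤ Rs)
    (hi : E ^ 2 = E' ^ 2 + D ^ 2)
    (hii : O ^ 2 - Os ^ 2 ≤ 2 * O' ^ 2 + 2 * CA * D ^ 2)
    (hiii : D ^ 2 ≤ (β / α ^ 2) * Rs ^ 2)
    (hiv : R ^ 2 ≤ (β ^ 2 / α) * E ^ 2)
    (hv : E' ^ 2 + O' ^ 2 ≤ μ * (E ^ 2 + O ^ 2)) :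
    Rs ^ 2 + Os ^ 2 ≥ (α ^ 3 * (1 - 2 * μ) / (β ^ 3 * (1 + 2 * CA))) * (R ^ 2 + O ^ 2) := by
  obtain ⟨hμ0, hμ2⟩ := hμ
  have hβ : 0 < β := lt_of_lt_of_le hα hαβ
  have hC : (0:ℝ) < 1 + 2 * CA := by linarith
  have hμ' : (0:ℝ) ≤ 1 - 2 * μ := by linarith
  -- clear denominators in (iii) and (iv)
  have hA : α ^ 2 * D ^ 2 ≤ β * Rs ^ 2 := by
    have h := hiii
    rw [div_mul_eq_mul_div, le_div_iff₀ (by positivity)] at h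
    linarith
  have hB : α * R ^ 2 ≤ β ^ 2 * E ^ 2 := by
    have h := hiv
    rw [div_mul_eq_mul_div, le_div_iff₀ hα] at h
    linarith
  -- key reduction estimate
  have h1 : (1 - 2 * μ) * (E ^ 2 + O ^ 2) ≤ (1 + 2 * CA) * D ^ 2 + Os ^ 2 := by
    nlinarith
  have hO2 : α * O ^ 2 ≤ β ^ 2 * O ^ 2 := by nlinarith
  have hab : α * (R ^ 2 + O ^ 2) ≤ β ^ 2 * (E ^ 2 + O ^ 2) := by linarith
  have h2a : (1 - 2 * μ) * (α * (R ^ 2 + O ^ 2)) ≤ (1 - 2 * μ) * (β ^ 2 * (E ^ 2 + O ^ 2)) :=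
    mul_le_mul_of_nonneg_left hab hμ'
  have h2b : β ^ 2 * ((1 - 2 * μ) * (E ^ 2 + O ^ 2)) ≤ β ^ 2 * ((1 + 2 * CA) * D ^ 2 + Os ^ 2) :=
    mul_le_mul_of_nonneg_left h1 (by positivity)
  have h2 : (1 - 2 * μ) * (α * (R ^ 2 + O ^ 2)) ≤ β ^ 2 * ((1 + 2 * CA) * D ^ 2 + Os ^ 2) := by
    linarith [h2a, h2b]
  have h3 := mul_le_mul_of_nonneg_left h2 (by positivity : (0:ℝ) ≤ α ^ 2)
  have h4 : (β ^ 2 * (1 + 2 * CA)) * (α ^ 2 * D ^ 2) ≤ (β ^ 2 * (1 + 2 * CA)) * (β * Rs ^ 2) :=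
    mul_le_mul_of_nonneg_left hA (by positivity)
  have h5 : (β ^ 2 * Os ^ 2) * α ^ 2 ≤ (β ^ 2 * Os ^ 2) * ((1 + 2 * CA) * β) :=
    mul_le_mul_of_nonneg_left hα2β (by positivity)
  have h6 : α ^ 3 * (1 - 2 * μ) * (R ^ 2 + O ^ 2) ≤ β ^ 3 * (1 + 2 * CA) * (Rs ^ 2 + Os ^ 2) := by
    linarith [h3, h4, h5]
  rw [ge_iff_le, div_mul_eq_mul_div, div_le_iff₀ (by positivity)]
  linarith [h6]
end

section
/- (Arithmetic core of Proposition 3.3: contraction of the total error for the zero order adaptive method.) Let 0 < α ≤ β, C_J ≥ 0, C_A ≥ 0, λ ∈ (0, 1], θ ∈ (0, 1]. Let E, E′, D, O, O′, O* be nonnegative real numbers satisfying: (i) E′² = E² − D²; (ii) θ ((α²/β) E² + O²) ≤ (2β²/α) D² + 2(2C_J + 1)² O*²; (iii) for every δ > 0: O′² ≤ (1 + δ)(O² − λ O*²) + C_A (1 + 1/δ) D². Then there exist constants γ > 0 and μ ∈ (0, 1), depending only on α, β, C_J, C_A, λ, θ, such that E′² + γ O′² ≤ μ (E² + γ O²).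 -/
private lemma aux_O2coef (s : ℝ) (_hs : 0 < s) : (1 + s / 2) * (1 - s) ≤ 1 - s / 2 := by
  nlinarith [sq_nonneg s]

set_option maxHeartbeats 1000000

/-- Arithmetic core of Proposition 3.3: contraction of the total error for the zero order
adaptive method. There exist `γ > 0` and `μ ∈ (0,1)`, depending only on
`α, β, C_J, C_A, λ, θ`, such that whenever (i) Galerkin orthogonality,
(ii) the combined upper bound / local discrete lower bound / Dörfler property, and
(iii) the oscillation reduction hold, then `E′² + γ O′² ≤ μ (E² + γ O²)`. -/
theorem zero_order_contraction
    (α β CJ CA lam θ : ℝ) (hα : 0 < α) (hαβ : α ≤ β) (hCJ : 0 ≤ CJ) (hCA : 0 ≤ CA)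
    (hlam : lam ∈ Set.Ioc (0 : ℝ) 1) (hθ : θ ∈ Set.Ioc (0 : ℝ) 1) :
    ∃ γ : ℝ, 0 < γ ∧ ∃ μ ∈ Set.Ioo (0 : ℝ) 1,
      ∀ E E' D O O' Os : ℝ,
        0 ≤ E → 0 ≤ E' → 0 ≤ D → 0 ≤ O → 0 ≤ O' → 0 ≤ Os →
        E' ^ 2 = E ^ 2 - D ^ 2 →
        θ * ((α ^ 2 / β) * E ^ 2 + O ^ 2) ≤
          (2 * β ^ 2 / α) * D ^ 2 + 2 * (2 * CJ + 1) ^ 2 * Os ^ 2 →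
        (∀ δ : ℝ, 0 < δ →
          O' ^ 2 ≤ (1 + δ) * (O ^ 2 - lam * Os ^ 2) + CA * (1 + 1 / δ) * D ^ 2) →
        E' ^ 2 + γ * O' ^ 2 ≤ μ * (E ^ 2 + γ * O ^ 2) := by
  obtain ⟨hlam0, hlam1⟩ := hlam
  obtain ⟨hθ0, hθ1⟩ := hθ
  have hβ : 0 < β := lt_of_lt_of_le hα hαβ
  obtain ⟨a, ha_def⟩ : ∃ x : ℝ, x = α ^ 2 / β := ⟨_, rfl⟩
  obtain ⟨b, hb_def⟩ : ∃ x : ℝ, x = 2 * β ^ 2 / α := ⟨_, rfl⟩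
  obtain ⟨c, hc_def⟩ : ∃ x : ℝ, x = 2 * (2 * CJ + 1) ^ 2 := ⟨_, rfl⟩
  have ha : 0 < a := by rw [ha_def]; positivity
  have hb : 0 < b := by rw [hb_def]; positivity
  have hc2 : 2 ≤ c := by rw [hc_def]; nlinarith
  have hc : 0 < c := by linarith
  obtain ⟨r, hr_def⟩ : ∃ x : ℝ, x = lam * θ / c := ⟨_, rfl⟩
  have hr0 : 0 < r := by rw [hr_def]; positivity
  have hr : r ≤ 1 / 2 := by
    rw [hr_def, div_le_iff₀ hc]; nlinarith
  obtain ⟨δ, hδ_def⟩ : ∃ x : ℝ, x = r / 2 := ⟨_, rfl⟩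
  have hδ0 : 0 < δ := by rw [hδ_def]; linarith
  have hδ1 : 0 < 1 + δ := by linarith
  have hδinv : 0 < 1 + 1 / δ := by
    have := one_div_pos.mpr hδ0; linarith
  obtain ⟨K, hK_def⟩ : ∃ x : ℝ, x = CA * (1 + 1 / δ) + (1 + δ) * lam * b / c := ⟨_, rfl⟩
  have hK : 0 < K := by
    have h1' : 0 ≤ CA * (1 + 1 / δ) := mul_nonneg hCA hδinv.le
    have h2' : 0 < (1 + δ) * lam * b / c :=
      div_pos (mul_pos (mul_pos hδ1 hlam0) hb) hc
    rw [hK_def]; linarith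
  obtain ⟨γ, hγ_def⟩ : ∃ x : ℝ, x = 1 / K := ⟨_, rfl⟩
  have hγ0 : 0 < γ := by rw [hγ_def]; positivity
  obtain ⟨μ, hμ_def⟩ : ∃ x : ℝ,
      x = max (1 - γ * (1 + δ) * lam * θ * a / c) (1 - r / 2) := ⟨_, rfl⟩
  have hμ1 : 1 - γ * (1 + δ) * lam * θ * a / c ≤ μ := hμ_def ▸ le_max_left _ _
  have hμ2 : 1 - r / 2 ≤ μ := hμ_def ▸ le_max_right _ _
  refine ⟨γ, hγ0, μ, ⟨⟨?_, ?_⟩, ?_⟩⟩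
  · have h0 : (0:ℝ) < 1 - r / 2 := by linarith
    linarith
  · have hpos : 0 < γ * (1 + δ) * lam * θ * a / c :=
      div_pos (mul_pos (mul_pos (mul_pos (mul_pos hγ0 hδ1) hlam0) hθ0) ha) hc
    rw [hμ_def]
    apply max_lt <;> linarith
  · intro E E' D O O' Os hE hE' hD hO hO' hOs h1 h2 h3
    have h3δ := h3 δ hδ0
    have hOsc : θ * (a * E ^ 2 + O ^ 2) ≤ b * D ^ 2 + c * Os ^ 2 := by
      rw [ha_def, hb_def, hc_def]; linarith
    have ht0 : 0 ≤ γ * (1 + δ) * lam / c :=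
      div_nonneg (mul_nonneg (mul_nonneg hγ0.le hδ1.le) hlam0.le) hc.le
    have hstep : γ * (1 + δ) * lam / c * (θ * (a * E ^ 2 + O ^ 2) - b * D ^ 2)
        ≤ γ * (1 + δ) * lam * Os ^ 2 := by
      have h := mul_le_mul_of_nonneg_left
        (by linarith : θ * (a * E ^ 2 + O ^ 2) - b * D ^ 2 ≤ c * Os ^ 2) ht0
      calc γ * (1 + δ) * lam / c * (θ * (a * E ^ 2 + O ^ 2) - b * D ^ 2)
          ≤ γ * (1 + δ) * lam / c * (c * Os ^ 2) := h
        _ = γ * (1 + δ) * lam * Os ^ 2 := by field_simp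
    have hA : γ * O' ^ 2 ≤ γ * ((1 + δ) * (O ^ 2 - lam * Os ^ 2) + CA * (1 + 1 / δ) * D ^ 2) :=
      mul_le_mul_of_nonneg_left h3δ hγ0.le
    have hO2coef : (1 + δ) * (1 - lam * θ / c) ≤ 1 - r / 2 := by
      rw [hδ_def, ← hr_def]; exact aux_O2coef r hr0
    have hDcoef : γ * (CA * (1 + 1 / δ)) + γ * ((1 + δ) * lam * b / c) ≤ 1 := by
      have hγK : γ * K = 1 := by
        rw [hγ_def]; field_simp
      have : γ * (CA * (1 + 1 / δ)) + γ * ((1 + δ) * lam * b / c) = γ * K := by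
        rw [hK_def]; ring
      linarith [this, hγK]
    have pE := mul_le_mul_of_nonneg_right hμ1 (sq_nonneg E)
    have pO1 := mul_le_mul_of_nonneg_right hO2coef (mul_nonneg hγ0.le (sq_nonneg O))
    have pO2 := mul_le_mul_of_nonneg_right hμ2 (mul_nonneg hγ0.le (sq_nonneg O))
    have pD := mul_le_mul_of_nonneg_right hDcoef (sq_nonneg D)
    have key : μ * (E ^ 2 + γ * O ^ 2) - (E' ^ 2 + γ * O' ^ 2) =
        (E ^ 2 - D ^ 2 - E' ^ 2)
        + (γ * ((1 + δ) * (O ^ 2 - lam * Os ^ 2) + CA * (1 + 1 / δ) * D ^ 2) - γ * O' ^ 2)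
        + (γ * (1 + δ) * lam * Os ^ 2
            - γ * (1 + δ) * lam / c * (θ * (a * E ^ 2 + O ^ 2) - b * D ^ 2))
        + (μ * E ^ 2 - (1 - γ * (1 + δ) * lam * θ * a / c) * E ^ 2)
        + ((1 - r / 2) * (γ * O ^ 2) - (1 + δ) * (1 - lam * θ / c) * (γ * O ^ 2))
        + (μ * (γ * O ^ 2) - (1 - r / 2) * (γ * O ^ 2))
        + (1 * D ^ 2 - (γ * (CA * (1 + 1 / δ)) + γ * ((1 + δ) * lam * b / c)) * D ^ 2) := by
      ring
    have hnn : 0 ≤ μ * (E ^ 2 + γ * O ^ 2) - (E' ^ 2 + γ * O' ^ 2) := by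
      rw [key]
      have s1 : (0:ℝ) ≤ E ^ 2 - D ^ 2 - E' ^ 2 := by linarith [h1]
      exact add_nonneg (add_nonneg (add_nonneg (add_nonneg (add_nonneg (add_nonneg s1
        (sub_nonneg.mpr hA)) (sub_nonneg.mpr hstep)) (sub_nonneg.mpr pE))
        (sub_nonneg.mpr pO1)) (sub_nonneg.mpr pO2)) (sub_nonneg.mpr pD)
    linarith [hnn]
end

section
/- (Arithmetic core of Proposition 4.3: contraction for the positive order adaptive method, CKNS-type argument.) Let C > 0, C_A ≥ 0, λ ∈ (0, 1] and ϑ ∈ (0, 1). Let E, E′, D, η, η′, η* be nonnegative real numbers satisfying: (i) E′² = E² − D²; (ii) E² ≤ C η²; (iii) for every δ > 0: η′² ≤ (1 + δ) η² − λ (1 + δ) η*² + C_A (1 + 1/δ) D²; (iv) η* ≥ ϑ η. Then there exist constants γ > 0 and μ ∈ (0, 1), depending only on C, C_A, λ, ϑ, such that E′² + γ η′² ≤ μ (E² + γ η²). -/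
/-- Arithmetic core of Proposition 4.3: contraction for the positive order adaptive method
(CKNS-type argument). There exist `γ > 0` and `μ ∈ (0,1)`, depending only on
`C, C_A, λ, ϑ`, such that whenever (i) Galerkin orthogonality, (ii) the global upper bound,
(iii) the estimator reduction, and (iv) the Dörfler property hold, then
`E′² + γ η′² ≤ μ (E² + γ η²)`. -/
theorem positive_order_contraction
    (C CA lam θ : ℝ) (hC : 0 < C) (hCA : 0 ≤ CA)
    (hlam : lam ∈ Set.Ioc (0 : ℝ) 1) (hθ : θ ∈ Set.Ioo (0 : ℝ) 1) :
    ∃ γ : ℝ, 0 < γ ∧ ∃ μ ∈ Set.Ioo (0 : ℝ) 1,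
      ∀ E E' D η η' ηs : ℝ,
        0 ≤ E → 0 ≤ E' → 0 ≤ D → 0 ≤ η → 0 ≤ η' → 0 ≤ ηs →
        E' ^ 2 = E ^ 2 - D ^ 2 →
        E ^ 2 ≤ C * η ^ 2 →
        (∀ δ : ℝ, 0 < δ →
          η' ^ 2 ≤ (1 + δ) * η ^ 2 - lam * (1 + δ) * ηs ^ 2 + CA * (1 + 1 / δ) * D ^ 2) →
        θ * η ≤ ηs →
        E' ^ 2 + γ * η' ^ 2 ≤ μ * (E ^ 2 + γ * η ^ 2) := by
  obtain ⟨hlam0, hlam1⟩ := hlam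
  obtain ⟨hθ0, hθ1⟩ := hθ
  obtain ⟨s, hseq⟩ : ∃ s : ℝ, s = lam * θ ^ 2 := ⟨_, rfl⟩
  have hs0 : 0 < s := hseq ▸ mul_pos hlam0 (pow_pos hθ0 2)
  have hs1 : s < 1 := by rw [hseq]; nlinarith
  have h1s : 0 < 1 - s := by linarith
  obtain ⟨δ, hδdef⟩ : ∃ d : ℝ, d = s / (2 * (1 - s)) := ⟨_, rfl⟩
  have hδ0 : 0 < δ := hδdef ▸ by positivity
  obtain ⟨ρ, hρdef⟩ : ∃ r : ℝ, r = 1 - s / 2 := ⟨_, rfl⟩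
  have hρlt : ρ < 1 := by rw [hρdef]; linarith
  have hρpos : 0 < ρ := by rw [hρdef]; linarith
  have h1ρ : 0 < 1 - ρ := by linarith
  have hρeq : (1 + δ) * (1 - s) = ρ := by
    rw [hδdef, hρdef]
    field_simp
    ring
  clear hδdef hρdef
  have h1δ : 0 < 1 + 1 / δ := by
    have := one_div_pos.mpr hδ0
    linarith
  obtain ⟨K, hKdef⟩ : ∃ k : ℝ, k = CA * (1 + 1 / δ) + 1 := ⟨_, rfl⟩
  have hKC : CA * (1 + 1 / δ) ≤ K := by
    rw [hKdef]; linarith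
  have hK0 : 0 < K := by
    have := mul_nonneg hCA h1δ.le
    rw [hKdef]; linarith
  clear hKdef
  obtain ⟨γ, hγdef⟩ : ∃ g : ℝ, g = min (1 / K) C := ⟨_, rfl⟩
  have hγ0 : 0 < γ := hγdef ▸ lt_min (by positivity) hC
  have hγle : γ ≤ 1 / K := hγdef ▸ min_le_left _ _
  clear hγdef
  have hγK : γ * (CA * (1 + 1 / δ)) ≤ 1 := by
    have h1 : γ * K ≤ 1 := (le_div_iff₀ hK0).mp hγle
    have h2 := mul_le_mul_of_nonneg_left hKC hγ0.le
    linarith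
  have hcoef : 0 < γ * (1 - ρ) / (2 * C) := div_pos (mul_pos hγ0 h1ρ) (by linarith)
  obtain ⟨μ, hμdef⟩ :
      ∃ m : ℝ, m = max (1 - γ * (1 - ρ) / (2 * C)) ((1 + ρ) / 2) := ⟨_, rfl⟩
  have hμ2 : (1 + ρ) / 2 ≤ μ := hμdef ▸ le_max_right _ _
  have hμ1 : 1 - μ ≤ γ * (1 - ρ) / (2 * C) := by
    have := le_max_left (1 - γ * (1 - ρ) / (2 * C)) ((1 + ρ) / 2)
    rw [hμdef]
    linarith
  have hμlt : μ < 1 := by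
    rw [hμdef]
    apply max_lt <;> [linarith; linarith]
  clear hμdef
  refine ⟨γ, hγ0, μ, ⟨by linarith, hμlt⟩, ?_⟩
  intro E E' D η η' ηs hE hE' hD hη hη' hηs hi hii hiii hiv
  have hηs2 : θ ^ 2 * η ^ 2 ≤ ηs ^ 2 := by
    nlinarith [mul_nonneg hθ0.le hη]
  have h3 := hiii δ hδ0
  have hkey : η' ^ 2 ≤ ρ * η ^ 2 + CA * (1 + 1 / δ) * D ^ 2 := by
    have hl : lam * (1 + δ) * (θ ^ 2 * η ^ 2) ≤ lam * (1 + δ) * ηs ^ 2 :=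
      mul_le_mul_of_nonneg_left hηs2 (by positivity)
    have hc : (1 + δ) * η ^ 2 - lam * (1 + δ) * (θ ^ 2 * η ^ 2)
        = ((1 + δ) * (1 - s)) * η ^ 2 := by rw [hseq]; ring
    rw [hρeq] at hc
    linarith
  have hstep : E' ^ 2 + γ * η' ^ 2 ≤ E ^ 2 + γ * ρ * η ^ 2 := by
    have hm := mul_le_mul_of_nonneg_left hkey hγ0.le
    have ha : γ * (ρ * η ^ 2 + CA * (1 + 1 / δ) * D ^ 2)
        = γ * ρ * η ^ 2 + γ * (CA * (1 + 1 / δ)) * D ^ 2 := by ring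
    have hb := mul_le_mul_of_nonneg_right hγK (sq_nonneg D)
    rw [ha] at hm
    linarith
  have hfin : E ^ 2 + γ * ρ * η ^ 2 ≤ μ * (E ^ 2 + γ * η ^ 2) := by
    have t1 : (1 - μ) * E ^ 2 ≤ γ * (1 - ρ) / (2 * C) * E ^ 2 :=
      mul_le_mul_of_nonneg_right hμ1 (sq_nonneg E)
    have t2 : γ * (1 - ρ) / (2 * C) * E ^ 2 ≤ γ * (1 - ρ) / (2 * C) * (C * η ^ 2) :=
      mul_le_mul_of_nonneg_left hii hcoef.le
    have t3 : γ * (1 - ρ) / (2 * C) * (C * η ^ 2) = γ * (1 - ρ) / 2 * η ^ 2 := by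
      field_simp [hC.ne']
    have t4 : γ * (1 - ρ) / 2 * η ^ 2 ≤ (μ - ρ) * γ * η ^ 2 := by
      have h6 : (1 - ρ) / 2 ≤ μ - ρ := by linarith
      have h5' := mul_le_mul_of_nonneg_left h6 hγ0.le
      have h5 : γ * (1 - ρ) / 2 ≤ (μ - ρ) * γ := by linarith
      exact mul_le_mul_of_nonneg_right h5 (sq_nonneg η)
    linarith [t1, t2, t3, t4]
  linarith
end

section
/- (Fractional Poincaré inequality for the mean value; core of the direct estimate for the L²-projection onto piecewise constants.) Let n ≥ 1, s > 0, and let τ ⊆ ℝⁿ be a Lebesgue measurable set with 0 < |τ| < ∞ and diam(τ) ≤ h. For v ∈ L²(τ) with mean v̄ = (1/|τ|) ∫_τ v, it holds that ∫_τ |v − v̄|² ≤ (h^{n+2s} / (2|τ|)) · ∬_{τ×τ} |v(x) − v(y)|² / |x − y|^{n+2s} dx dy. In particular, if h^n ≤ σ |τ| for some σ > 0 (shape regularity), then ‖v − v̄‖_{L²(τ)}² ≤ (σ/2) h^{2s} |v|_{s,τ}². -/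
open MeasureTheory
open scoped ENNReal

/-- The Slobodeckij double-integral seminorm (squared) of `v` over `τ ⊆ ℝⁿ`, with values
in `[0, ∞]`:  `|v|_{s,τ}² = ∬_{τ×τ} |v(x) − v(y)|² / |x − y|^{n+2s} dx dy`. -/
noncomputable def slobodeckijSq (n : ℕ) (s : ℝ) (v : EuclideanSpace ℝ (Fin n) → ℝ)
    (τ : Set (EuclideanSpace ℝ (Fin n))) : ℝ≥0∞ :=
  ∫⁻ p in τ ×ˢ τ,
    ENNReal.ofReal (|v p.1 - v p.2| ^ 2 / ‖p.1 - p.2‖ ^ ((n : ℝ) + 2 * s)) ∂volume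

/-!
Expanding the square gives `∬ (v x - v y)² = 2 |τ| ∫ (v - v̄)²` over `τ × τ`, because the
cross term is `2 (∫ (v - v̄))² = 0`. On `τ × τ` we have `|x - y| ≤ h`, so
`(v x - v y)² ≤ h^{n+2s} |v x - v y|² / |x - y|^{n+2s}`, and integrating yields the first bound.
The second follows from `h^{n+2s} = hⁿ h^{2s} ≤ σ |τ| h^{2s}`.
-/

open Set

section PairwiseVariance

variable {α : Type*} [MeasurableSpace α] {μ : Measure α} [IsFiniteMeasure μ] {v : α → ℝ}

theorem integrable_prod_sub_sq (hv : MemLp v 2 μ) :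
    Integrable (fun p : α × α => (v p.1 - v p.2) ^ 2) (μ.prod μ) :=
  ((hv.comp_fst μ).sub (hv.comp_snd μ)).integrable_sq

theorem integral_prod_sub_sq_of_integral_eq_zero (hv : MemLp v 2 μ)
    (hv₀ : ∫ x, v x ∂μ = 0) :
    ∫ p, (v p.1 - v p.2) ^ 2 ∂(μ.prod μ) = 2 * μ.real univ * ∫ x, v x ^ 2 ∂μ := by
  have hv₁ : Integrable v μ := hv.integrable one_le_two
  have hv₂ : Integrable (fun x => v x ^ 2) μ := hv.integrable_sq
  have hexpand : (fun p : α × α => (v p.1 - v p.2) ^ 2)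
      = fun p => (v p.1 ^ 2 + v p.2 ^ 2) - (2 * v p.1) * v p.2 := by
    funext p; ring
  have hsum : Integrable (fun p : α × α => v p.1 ^ 2 + v p.2 ^ 2) (μ.prod μ) :=
    (hv₂.comp_fst μ).add (hv₂.comp_snd μ)
  rw [hexpand, integral_sub hsum ((hv₁.const_mul 2).mul_prod hv₁),
    integral_add (hv₂.comp_fst μ) (hv₂.comp_snd μ),
    integral_fun_fst (fun x => v x ^ 2), integral_fun_snd (fun x => v x ^ 2),
    integral_prod_mul (fun x => 2 * v x) v, integral_const_mul, hv₀, smul_eq_mul]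
  ring

theorem integral_prod_sub_sq (hv : MemLp v 2 μ) :
    ∫ p, (v p.1 - v p.2) ^ 2 ∂(μ.prod μ)
      = 2 * μ.real univ * ∫ x, (v x - ⨍ y, v y ∂μ) ^ 2 ∂μ := by
  have hcenter := integral_prod_sub_sq_of_integral_eq_zero
    (hv.sub (memLp_const (⨍ y, v y ∂μ))) (integral_sub_average μ v)
  simpa only [Pi.sub_apply, sub_sub_sub_cancel_right] using hcenter

theorem lintegral_prod_sub_sq (hv : MemLp v 2 μ) :
    ∫⁻ p, ENNReal.ofReal ((v p.1 - v p.2) ^ 2) ∂(μ.prod μ)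
      = 2 * μ univ * ∫⁻ x, ENNReal.ofReal ((v x - ⨍ y, v y ∂μ) ^ 2) ∂μ := by
  have hw : MemLp (fun x => v x - ⨍ y, v y ∂μ) 2 μ := hv.sub (memLp_const _)
  rw [← ofReal_integral_eq_lintegral_ofReal (integrable_prod_sub_sq hv)
      (ae_of_all _ fun _ => sq_nonneg _),
    ← ofReal_integral_eq_lintegral_ofReal hw.integrable_sq (ae_of_all _ fun _ => sq_nonneg _),
    integral_prod_sub_sq hv, ENNReal.ofReal_mul (by positivity), ENNReal.ofReal_mul zero_le_two,
    measureReal_def, ENNReal.ofReal_toReal (measure_ne_top μ univ), ENNReal.ofReal_ofNat]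

end PairwiseVariance

theorem sq_sub_le_rpow_mul_div_norm_rpow {E : Type*} [NormedAddCommGroup E] (f : E → ℝ)
    {x y : E} {h P : ℝ} (hxy : ‖x - y‖ ≤ h) (hP : 0 ≤ P) :
    (f x - f y) ^ 2 ≤ h ^ P * (|f x - f y| ^ 2 / ‖x - y‖ ^ P) := by
  rcases eq_or_ne x y with rfl | hne
  · simp
  have hd : 0 < ‖x - y‖ := norm_pos_iff.mpr (sub_ne_zero.mpr hne)
  calc (f x - f y) ^ 2 = ‖x - y‖ ^ P * (|f x - f y| ^ 2 / ‖x - y‖ ^ P) := by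
        rw [sq_abs, mul_div_cancel₀ _ (Real.rpow_pos_of_pos hd P).ne']
    _ ≤ h ^ P * (|f x - f y| ^ 2 / ‖x - y‖ ^ P) := by
        gcongr

theorem setLIntegral_prod_sq_sub_le_slobodeckijSq {n : ℕ} {s h : ℝ} (hs : 0 ≤ s) (hh : 0 ≤ h)
    {τ : Set (EuclideanSpace ℝ (Fin n))} (hτ : MeasurableSet τ)
    (hdiam : Metric.ediam τ ≤ ENNReal.ofReal h) (v : EuclideanSpace ℝ (Fin n) → ℝ) :
    ∫⁻ p in τ ×ˢ τ, ENNReal.ofReal ((v p.1 - v p.2) ^ 2)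
      ≤ ENNReal.ofReal (h ^ ((n : ℝ) + 2 * s)) * slobodeckijSq n s v τ := by
  rw [slobodeckijSq, ← lintegral_const_mul' _ _ ENNReal.ofReal_ne_top]
  refine setLIntegral_mono' (hτ.prod hτ) fun p ⟨hx, hy⟩ => ?_
  have hdist : ‖p.1 - p.2‖ ≤ h := by
    rw [← dist_eq_norm, ← edist_le_ofReal hh]
    exact (Metric.edist_le_ediam_of_mem hx hy).trans hdiam
  rw [← ENNReal.ofReal_mul (by positivity)]
  exact ENNReal.ofReal_le_ofReal
    (sq_sub_le_rpow_mul_div_norm_rpow v hdist (by positivity))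

theorem ofReal_rpow_add_div_le {h a b σ : ℝ} {m : ℝ≥0∞} (hh : 0 ≤ h) (hab : a + b ≠ 0)
    (hm : m ≠ ⊤) (hreg : h ^ a ≤ σ * m.toReal) :
    ENNReal.ofReal (h ^ (a + b)) / (2 * m) ≤ ENNReal.ofReal (σ / 2 * h ^ b) := by
  have hb : 0 ≤ h ^ b := Real.rpow_nonneg hh b
  refine ENNReal.div_le_of_le_mul ?_
  rw [← ENNReal.ofReal_toReal hm, ← ENNReal.ofReal_ofNat 2,
    ← ENNReal.ofReal_mul zero_le_two, ← ENNReal.ofReal_mul' (by positivity)]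
  refine ENNReal.ofReal_le_ofReal ?_
  calc h ^ (a + b) = h ^ a * h ^ b := Real.rpow_add' hh hab
    _ ≤ σ * m.toReal * h ^ b := by gcongr
    _ = σ / 2 * h ^ b * (2 * m.toReal) := by ring

theorem fractional_poincare_mean_general
    (n : ℕ) (s : ℝ) (hs : 0 < s) (h : ℝ) (hh : 0 ≤ h)
    (τ : Set (EuclideanSpace ℝ (Fin n))) (hτm : MeasurableSet τ)
    (hτpos : 0 < volume τ) (hτfin : volume τ < ⊤)
    (hdiam : EMetric.diam τ ≤ ENNReal.ofReal h)
    (v : EuclideanSpace ℝ (Fin n) → ℝ) (hv : MemLp v 2 (volume.restrict τ)) :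
    (∫⁻ x in τ, ENNReal.ofReal
        ((v x - (∫ y in τ, v y) / (volume τ).toReal) ^ 2) ∂volume) ≤
      ENNReal.ofReal (h ^ ((n : ℝ) + 2 * s)) / (2 * volume τ) * slobodeckijSq n s v τ ∧
    ∀ σ : ℝ, 0 < σ → h ^ (n : ℝ) ≤ σ * (volume τ).toReal →
      (∫⁻ x in τ, ENNReal.ofReal
          ((v x - (∫ y in τ, v y) / (volume τ).toReal) ^ 2) ∂volume) ≤
        ENNReal.ofReal (σ / 2 * h ^ (2 * s)) * slobodeckijSq n s v τ := by
  have : IsFiniteMeasure (volume.restrict τ) := isFiniteMeasure_restrict.mpr hτfin.ne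
  have hmean : (∫ y in τ, v y) / (volume τ).toReal = ⨍ y in τ, v y := by
    rw [setAverage_eq, smul_eq_mul, inv_mul_eq_div, measureReal_def]
  have hpair : 2 * volume τ * ∫⁻ x in τ, ENNReal.ofReal ((v x - ⨍ y in τ, v y) ^ 2)
      ≤ ENNReal.ofReal (h ^ ((n : ℝ) + 2 * s)) * slobodeckijSq n s v τ := by
    rw [← Measure.restrict_apply_univ, ← lintegral_prod_sub_sq hv, Measure.prod_restrict,
      ← Measure.volume_eq_prod]
    exact setLIntegral_prod_sq_sub_le_slobodeckijSq hs.le hh hτm hdiam v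
  have hpoincare : ∫⁻ x in τ, ENNReal.ofReal ((v x - (∫ y in τ, v y) / (volume τ).toReal) ^ 2)
      ≤ ENNReal.ofReal (h ^ ((n : ℝ) + 2 * s)) / (2 * volume τ) * slobodeckijSq n s v τ := by
    rw [hmean, ← ENNReal.mul_div_right_comm, ENNReal.le_div_iff_mul_le
      (Or.inl (mul_ne_zero two_ne_zero hτpos.ne')) (Or.inl (ENNReal.mul_ne_top (by simp) hτfin.ne)),
      mul_comm]
    exact hpair
  refine ⟨hpoincare, fun σ _ hreg => hpoincare.trans ?_⟩
  gcongr
  exact ofReal_rpow_add_div_le hh (by positivity) hτfin.ne hreg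

/-- Fractional Poincaré inequality for the mean value: for `τ ⊆ ℝⁿ` measurable with
`0 < |τ| < ∞` and `diam τ ≤ h`, and `v ∈ L²(τ)` with mean `v̄`,
`∫_τ |v − v̄|² ≤ (h^{n+2s}/(2|τ|)) |v|_{s,τ}²`; in particular, if `hⁿ ≤ σ |τ|`
(shape regularity), then `‖v − v̄‖_{L²(τ)}² ≤ (σ/2) h^{2s} |v|_{s,τ}²`. -/
theorem fractional_poincare_mean
    (n : ℕ) (hn : 1 ≤ n) (s : ℝ) (hs : 0 < s) (h : ℝ) (hh : 0 ≤ h)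
    (τ : Set (EuclideanSpace ℝ (Fin n))) (hτm : MeasurableSet τ)
    (hτpos : 0 < volume τ) (hτfin : volume τ < ⊤)
    (hdiam : EMetric.diam τ ≤ ENNReal.ofReal h)
    (v : EuclideanSpace ℝ (Fin n) → ℝ) (hv : MemLp v 2 (volume.restrict τ)) :
    (∫⁻ x in τ, ENNReal.ofReal
        ((v x - (∫ y in τ, v y) / (volume τ).toReal) ^ 2) ∂volume) ≤
      ENNReal.ofReal (h ^ ((n : ℝ) + 2 * s)) / (2 * volume τ) * slobodeckijSq n s v τ ∧
    ∀ σ : ℝ, 0 < σ → h ^ (n : ℝ) ≤ σ * (volume τ).toReal →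
      (∫⁻ x in τ, ENNReal.ofReal
          ((v x - (∫ y in τ, v y) / (volume τ).toReal) ^ 2) ∂volume) ≤
        ENNReal.ofReal (σ / 2 * h ^ (2 * s)) * slobodeckijSq n s v τ :=
  fractional_poincare_mean_general n s hs h hh τ hτm hτpos hτfin hdiam v hv
end

section
/- (Far-field interactions, Lemma 6.4.) Let n ≥ 1 and N ≥ 1 be integers and t, s, p ∈ ℝ with s + t > 0, p + t > 0 and p > s. Let ∇ be a countable index set with a level function |·| : ∇ → ℕ, and to each λ ∈ ∇ associate a nonempty bounded set Ω_λ ⊆ ℝ^N; set δ(λ, μ) = 2^{min(|λ|,|μ|)} dist(Ω_λ, Ω_μ). Assume the counting estimate: for every β > 0 there is a constant C_β such that for all ν ∈ ∇, m ∈ ℕ and R > 0, Σ_{μ : |μ| = m, δ(ν,μ) ≥ R} δ(ν, μ)^{−(n+β)} ≤ C_β R^{−β} 2^{n·max(0, m − |ν|)}. Let Λᶜ ⊆ ∇ with a function ℓ : Λᶜ → ℕ satisfying ℓ_λ ≤ |λ|, let ε > 0 and C₀ > 0, and let F = (F_{λμ})_{λ∈Λᶜ, μ∈∇} be real numbers such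 that F_{λμ} = 0 whenever dist(Ω_λ, Ω_μ) < ε·max(2^{−ℓ_λ}, 2^{−|μ|}), and |F_{λμ}| ≤ C₀ (2^{−||λ|−|μ||/2} / δ(λ, μ))^{n+2t+2p} otherwise. Then there exists a constant C, depending only on n, t, s, p, ε, C₀ and the constants C_β, such that for every v ∈ ℓ²(∇): Σ_{λ∈Λᶜ} 2^{2(|λ|−ℓ_λ)(s+t)} ( Σ_{μ∈∇} |F_{λμ}| |v_μ| )² ≤ C Σ_{μ∈∇} |v_μ|². -/
/-!
A weighted Schur test with the weights `2^{-q|μ|}`, `q = n/2 + s + t`: by Cauchy–Schwarz it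
suffices that the row sums `Σ_μ |F_{λμ}| 2^{-q|μ|}` are `≲ 2^{-q|λ|}` and that the weighted column
sums `Σ_λ 2^{2(|λ|-ℓ_λ)(s+t)} 2^{-q|λ|} |F_{λμ}|` are `≲ 2^{-q|μ|}`. Both are summed level by
level. On one level the counting estimate (with `β = 2(t+p)` for rows, `β = 2(p-s)` for columns)
turns the decay `δ^{-(n+2t+2p)}` into a power of `2` in the level difference, and the choice of
`q` makes it `≲ 2^{-(p-s)||λ|-|μ||}`, a geometric series. In the columns the weight
`2^{2(|λ|-ℓ_λ)(s+t)}` is paid for by the far-field condition, which gives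
`2^{|λ|-ℓ_λ} ≤ 2^{(|λ|-|μ|)^+} δ(λ,μ)/ε` and so costs only a factor `δ^{2(s+t)}`.
-/

open scoped ENNReal

/-- The distance between two subsets of a metric space:
`setDist A B = inf { dist x y : x ∈ A, y ∈ B }`. -/
noncomputable def setDist {X : Type*} [PseudoMetricSpace X] (A B : Set X) : ℝ :=
  sInf (Set.image2 dist A B)

theorem setDist_comm {X : Type*} [PseudoMetricSpace X] (A B : Set X) :
    setDist A B = setDist B A := by
  rw [setDist, setDist, Set.image2_swap]
  simp only [dist_comm]

namespace ENNReal

variable {ι κ : Type*}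

theorem tsum_sq_le_tsum_mul_tsum_of_sq_le_mul {r f g : ι → ℝ≥0∞} (h : ∀ i, r i ^ 2 ≤ f i * g i) :
    (∑' i, r i) ^ 2 ≤ (∑' i, f i) * ∑' i, g i := by
  have half_rpow_two : ∀ x : ℝ≥0∞, (x ^ (1 / 2 : ℝ)) ^ (2 : ℝ) = x := fun x => by
    rw [← rpow_mul]; norm_num
  have hr : ∀ i, r i ≤ f i ^ (1 / 2 : ℝ) * g i ^ (1 / 2 : ℝ) := fun i => by
    rw [← mul_rpow_of_nonneg _ _ (by norm_num : (0 : ℝ) ≤ 1 / 2)]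
    calc r i = (r i ^ (2 : ℝ)) ^ (1 / 2 : ℝ) := by rw [← rpow_mul]; norm_num
      _ ≤ (f i * g i) ^ (1 / 2 : ℝ) := by rw [rpow_two]; exact rpow_le_rpow (h i) (by norm_num)
  have hholder : ∑' i, r i ≤ (∑' i, f i) ^ (1 / 2 : ℝ) * (∑' i, g i) ^ (1 / 2 : ℝ) := by
    refine ENNReal.summable.tsum_le_of_sum_le fun s => ?_
    calc ∑ i ∈ s, r i ≤ ∑ i ∈ s, f i ^ (1 / 2 : ℝ) * g i ^ (1 / 2 : ℝ) :=
          Finset.sum_le_sum fun i _ => hr i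
      _ ≤ (∑ i ∈ s, (f i ^ (1 / 2 : ℝ)) ^ (2 : ℝ)) ^ (1 / 2 : ℝ) *
            (∑ i ∈ s, (g i ^ (1 / 2 : ℝ)) ^ (2 : ℝ)) ^ (1 / 2 : ℝ) :=
          inner_le_Lp_mul_Lq s _ _ .two_two
      _ ≤ _ := by
          simp only [half_rpow_two]
          gcongr <;> exact ENNReal.sum_le_tsum s
  calc (∑' i, r i) ^ 2 ≤ ((∑' i, f i) ^ (1 / 2 : ℝ) * (∑' i, g i) ^ (1 / 2 : ℝ)) ^ 2 := by gcongr
    _ = (∑' i, f i) * ∑' i, g i := by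
      rw [mul_pow, ← rpow_natCast, ← rpow_natCast, Nat.cast_ofNat, half_rpow_two, half_rpow_two]

theorem schur_test (A : ι → κ → ℝ≥0∞) (D r : ι → ℝ≥0∞) (w : κ → ℝ≥0∞) (C : ℝ≥0∞)
    (hw_ne_zero : ∀ μ, w μ ≠ 0) (hw_ne_top : ∀ μ, w μ ≠ ⊤) (hrow : ∀ i, ∑' μ, A i μ * w μ ≤ r i)
    (hcol : ∀ μ, ∑' i, D i * r i * A i μ ≤ C * w μ) (x : κ → ℝ≥0∞) :
    ∑' i, D i * (∑' μ, A i μ * x μ) ^ 2 ≤ C * ∑' μ, x μ ^ 2 := by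
  have hcs : ∀ i, (∑' μ, A i μ * x μ) ^ 2 ≤ r i * ∑' μ, A i μ * (x μ ^ 2 * (w μ)⁻¹) := by
    intro i
    refine (tsum_sq_le_tsum_mul_tsum_of_sq_le_mul (f := fun μ => A i μ * w μ)
      (g := fun μ => A i μ * (x μ ^ 2 * (w μ)⁻¹)) fun μ => le_of_eq ?_).trans
      (mul_le_mul_left (hrow i) _)
    calc (A i μ * x μ) ^ 2 = A i μ ^ 2 * x μ ^ 2 * (w μ * (w μ)⁻¹) := by
          rw [ENNReal.mul_inv_cancel (hw_ne_zero μ) (hw_ne_top μ), mul_one, mul_pow]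
      _ = _ := by ring
  calc ∑' i, D i * (∑' μ, A i μ * x μ) ^ 2
      ≤ ∑' i, D i * (r i * ∑' μ, A i μ * (x μ ^ 2 * (w μ)⁻¹)) := by gcongr with i; exact hcs i
    _ = ∑' μ, (∑' i, D i * r i * A i μ) * (x μ ^ 2 * (w μ)⁻¹) := by
      simp only [← ENNReal.tsum_mul_left, ← ENNReal.tsum_mul_right]
      rw [ENNReal.tsum_comm]
      simp only [mul_assoc]
    _ ≤ ∑' μ, C * w μ * (x μ ^ 2 * (w μ)⁻¹) := by gcongr with μ; exact hcol μ
    _ = C * ∑' μ, x μ ^ 2 := by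
      rw [← ENNReal.tsum_mul_left]
      congr 1 with μ
      rw [mul_comm (x μ ^ 2), ← mul_assoc, mul_assoc C,
        ENNReal.mul_inv_cancel (hw_ne_zero μ) (hw_ne_top μ)]
      ring

end ENNReal

theorem summable_two_rpow_neg_mul_abs {γ : ℝ} (hγ : 0 < γ) :
    Summable fun z : ℤ => (2 : ℝ) ^ (-γ * |(z : ℝ)|) := by
  have hgeom : Summable fun k : ℕ => ((2 : ℝ) ^ (-γ)) ^ k :=
    summable_geometric_of_lt_one (by positivity)
      (Real.rpow_lt_one_of_one_lt_of_neg one_lt_two (neg_neg_of_pos hγ))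
  have hk : ∀ k : ℕ, ((2 : ℝ) ^ (-γ)) ^ k = (2 : ℝ) ^ (-γ * k) := fun k => by
    rw [← Real.rpow_natCast, ← Real.rpow_mul zero_le_two]
  refine .of_nat_of_neg ?_ ?_ <;> simpa [hk] using hgeom

theorem tsum_le_of_level_decay {I : Type*} (lvl : I → ℕ) (L : ℕ) {f : I → ℝ≥0∞} {K γ : ℝ}
    (hγ : 0 < γ)
    (hf : ∀ m : ℕ, ∑' μ : lvl ⁻¹' {m}, f μ ≤ ENNReal.ofReal (K * 2 ^ (-γ * |(m : ℝ) - L|))) :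
    ∑' μ, f μ ≤ ENNReal.ofReal K * ENNReal.ofReal (∑' z : ℤ, (2 : ℝ) ^ (-γ * |(z : ℝ)|)) := by
  have hshift : Function.Injective fun m : ℕ => (m : ℤ) - L := fun a b h => by simpa using h
  calc ∑' μ, f μ = ∑' m : ℕ, ∑' μ : lvl ⁻¹' {m}, f μ := (ENNReal.tsum_fiberwise f lvl).symm
    _ ≤ ∑' m : ℕ,
        ENNReal.ofReal K * ENNReal.ofReal ((2 : ℝ) ^ (-γ * |(((m : ℤ) - L : ℤ) : ℝ)|)) := by
      gcongr with m
      rw [← ENNReal.ofReal_mul' (by positivity)]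
      push_cast
      exact hf m
    _ ≤ ENNReal.ofReal K * ∑' z : ℤ, ENNReal.ofReal ((2 : ℝ) ^ (-γ * |(z : ℝ)|)) := by
      rw [ENNReal.tsum_mul_left]
      gcongr
      exact ENNReal.tsum_comp_le_tsum_of_injective hshift
        (fun z : ℤ => ENNReal.ofReal ((2 : ℝ) ^ (-γ * |(z : ℝ)|)))
    _ = _ := by
      rw [ENNReal.ofReal_tsum_of_nonneg (fun z => by positivity) (summable_two_rpow_neg_mul_abs hγ)]

/-- The counting estimate, for an abstract `δ` in place of the scaled distance
`2^{min(|ν|,|μ|)} dist(Ω_ν, Ω_μ)`. -/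
def CountingEstimate {I : Type*} (n : ℕ) (lvl : I → ℕ) (δ : I → I → ℝ) (Cb : ℝ → ℝ) : Prop :=
  ∀ b : ℝ, 0 < b → ∀ ν : I, ∀ m : ℕ, ∀ R : ℝ, 0 < R →
    ∑' μ : {μ : I // lvl μ = m ∧ R ≤ δ ν μ}, ENNReal.ofReal (δ ν μ.1 ^ (-((n : ℝ) + b)))
      ≤ ENNReal.ofReal (Cb b * R ^ (-b) * 2 ^ ((n : ℝ) * max 0 ((m : ℝ) - (lvl ν : ℝ))))

namespace CountingEstimate

variable {I : Type*} {n : ℕ} {lvl : I → ℕ} {δ : I → I → ℝ} {Cb : ℝ → ℝ}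

theorem mono (h : CountingEstimate n lvl δ Cb) {Cb' : ℝ → ℝ} (hle : ∀ b, Cb b ≤ Cb' b) :
    CountingEstimate n lvl δ Cb' := fun b hb ν m R hR =>
  (h b hb ν m R hR).trans <| ENNReal.ofReal_le_ofReal <| by gcongr; exact hle b

theorem tsum_fiber_le (h : CountingEstimate n lvl δ Cb) {b R : ℝ} (hb : 0 < b) (hR : 0 < R)
    (ν : I) (m : ℕ) (c : ℝ≥0∞) {f : I → ℝ≥0∞}
    (hf : ∀ μ, lvl μ = m → f μ ≠ 0 →
      R ≤ δ ν μ ∧ f μ ≤ c * ENNReal.ofReal (δ ν μ ^ (-((n : ℝ) + b)))) :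
    ∑' μ : lvl ⁻¹' {m}, f μ ≤
      c * ENNReal.ofReal (Cb b * R ^ (-b) * 2 ^ ((n : ℝ) * max 0 ((m : ℝ) - (lvl ν : ℝ)))) := by
  set far : Set I := {μ | lvl μ = m ∧ R ≤ δ ν μ}
  calc ∑' μ : lvl ⁻¹' {m}, f μ
      ≤ ∑' μ : far, c * ENNReal.ofReal (δ ν μ ^ (-((n : ℝ) + b))) := by
        rw [tsum_subtype, tsum_subtype far fun μ => c * ENNReal.ofReal (δ ν μ ^ (-((n : ℝ) + b)))]
        refine ENNReal.tsum_le_tsum fun μ => ?_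
        by_cases hm : lvl μ = m
        · rcases eq_or_ne (f μ) 0 with hf0 | hf0
          · simp [hm, hf0]
          · obtain ⟨hfar, hle⟩ := hf μ hm hf0
            simpa [far, hm, hfar] using hle
        · simp [hm]
    _ ≤ _ := by rw [ENNReal.tsum_mul_left]; gcongr; exact h b hb ν m R hR

theorem tsum_le (h : CountingEstimate n lvl δ Cb) {b R γ K : ℝ} (hb : 0 < b) (hR : 0 < R)
    (hγ : 0 < γ) (ν : I) {g : ℕ → ℝ} (hg₀ : ∀ m, 0 ≤ g m)
    (hg : ∀ m : ℕ, g m * (Cb b * R ^ (-b) * 2 ^ ((n : ℝ) * max 0 ((m : ℝ) - (lvl ν : ℝ))))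
      ≤ K * 2 ^ (-γ * |(m : ℝ) - lvl ν|))
    {f : I → ℝ≥0∞}
    (hf : ∀ μ, f μ ≠ 0 →
      R ≤ δ ν μ ∧ f μ ≤ ENNReal.ofReal (g (lvl μ) * δ ν μ ^ (-((n : ℝ) + b)))) :
    ∑' μ, f μ ≤ ENNReal.ofReal K * ENNReal.ofReal (∑' z : ℤ, (2 : ℝ) ^ (-γ * |(z : ℝ)|)) := by
  refine tsum_le_of_level_decay lvl (lvl ν) hγ fun m => ?_
  refine (h.tsum_fiber_le hb hR ν m (ENNReal.ofReal (g m)) fun μ hμ hf0 => ?_).trans ?_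
  · rw [← ENNReal.ofReal_mul (hg₀ m), ← hμ]
    exact hf μ hf0
  · rw [← ENNReal.ofReal_mul (hg₀ m)]
    exact ENNReal.ofReal_le_ofReal (hg m)

end CountingEstimate

theorem level_exponent_le {A q γ κ x y : ℝ} (h₁ : γ ≤ A - q) (h₂ : γ ≤ q + A - κ) :
    -A * |y - x| - q * y + κ * max 0 (y - x) ≤ -(q * x) - γ * |y - x| := by
  rcases le_total x y with hxy | hyx
  · rw [abs_of_nonneg (sub_nonneg.2 hxy), max_eq_right (sub_nonneg.2 hxy)]
    nlinarith [mul_le_mul_of_nonneg_right h₂ (sub_nonneg.2 hxy)]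
  · rw [abs_of_nonpos (sub_nonpos.2 hyx), max_eq_left (sub_nonpos.2 hyx)]
    nlinarith [mul_le_mul_of_nonneg_right h₁ (sub_nonneg.2 hyx)]

theorem two_rpow_mul_le_of_scaled_le {ε c k j D : ℝ} (hε : 0 < ε) (hc : 0 ≤ c)
    (h : ε * 2 ^ k ≤ 2 ^ j * D) : (2 : ℝ) ^ (c * k) ≤ 2 ^ (c * j) * D ^ c * ε ^ (-c) := by
  have hD : 0 < D :=
    pos_of_mul_pos_right ((by positivity : 0 < ε * 2 ^ k).trans_le h) (by positivity)
  calc (2 : ℝ) ^ (c * k) = (2 ^ k) ^ c := by rw [← Real.rpow_mul zero_le_two, mul_comm]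
    _ ≤ (2 ^ j * D / ε) ^ c := by
      gcongr
      rwa [le_div_iff₀ hε, mul_comm]
    _ = 2 ^ (c * j) * D ^ c * ε ^ (-c) := by
      rw [Real.div_rpow (by positivity) hε.le, Real.mul_rpow (by positivity) hD.le,
        ← Real.rpow_mul zero_le_two, Real.rpow_neg hε.le, mul_comm j, div_eq_mul_inv]

theorem far_entry_bounds {ε C₀ a u D : ℝ} {L ℓ m : ℕ} (hℓ : ℓ ≤ L) (hε : 0 < ε)
    (hD : ε * max ((2 : ℝ) ^ (-(ℓ : ℝ))) ((2 : ℝ) ^ (-(m : ℝ))) ≤ D)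
    (hu : |u| ≤ C₀ * ((2 : ℝ) ^ (-(|(L : ℝ) - m| / 2)) / (2 ^ (min L m) * D)) ^ a) :
    ε ≤ 2 ^ (min L m) * D ∧
      ε * 2 ^ ((L : ℝ) - ℓ) ≤ 2 ^ (max 0 ((L : ℝ) - m)) * (2 ^ (min L m) * D) ∧
      |u| ≤ C₀ * 2 ^ (-(a / 2) * |(L : ℝ) - m|) * (2 ^ (min L m) * D) ^ (-a) := by
  have hmin : ((2 : ℝ) ^ (min L m)) = 2 ^ (min (L : ℝ) m) := by
    rw [← Real.rpow_natCast, Nat.cast_min]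
  have hpow_min :
      (2 : ℝ) ^ (-min (L : ℝ) m) ≤ max ((2 : ℝ) ^ (-(ℓ : ℝ))) ((2 : ℝ) ^ (-(m : ℝ))) := by
    rcases min_cases (L : ℝ) m with ⟨h, -⟩ | ⟨h, -⟩ <;> rw [h]
    · exact le_max_of_le_left (Real.rpow_le_rpow_of_exponent_le one_le_two (by simpa using hℓ))
    · exact le_max_right _ _
  have hfar : ε ≤ 2 ^ (min L m) * D := calc
    ε = 2 ^ (min (L : ℝ) m) * (ε * 2 ^ (-min (L : ℝ) m)) := by
      rw [mul_left_comm, ← Real.rpow_add two_pos, add_neg_cancel, Real.rpow_zero, mul_one]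
    _ ≤ 2 ^ (min L m) * D := by
      rw [hmin]; gcongr; exact (mul_le_mul_of_nonneg_left hpow_min hε.le).trans hD
  have hδ : 0 < 2 ^ (min L m) * D := hε.trans_le hfar
  refine ⟨hfar, ?_, ?_⟩
  · calc ε * 2 ^ ((L : ℝ) - ℓ) = 2 ^ (L : ℝ) * (ε * 2 ^ (-(ℓ : ℝ))) := by
          rw [sub_eq_add_neg, Real.rpow_add two_pos]; ring
      _ ≤ 2 ^ (L : ℝ) * D := by
          gcongr
          exact (mul_le_mul_of_nonneg_left (le_max_left _ _) hε.le).trans hD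
      _ = 2 ^ (max 0 ((L : ℝ) - m)) * (2 ^ (min L m) * D) := by
          rw [hmin, ← mul_assoc, ← Real.rpow_add two_pos]
          congr 2
          rcases le_total (L : ℝ) m with h | h
          · rw [max_eq_left (by linarith), min_eq_left h, zero_add]
          · rw [max_eq_right (by linarith), min_eq_right h, sub_add_cancel]
  · rw [Real.div_rpow (by positivity) hδ.le, ← Real.rpow_mul zero_le_two, div_eq_mul_inv,
      ← Real.rpow_neg hδ.le, ← mul_assoc] at hu
    convert hu using 4
    ring

namespace CountingEstimate

variable {I : Type*} {n : ℕ} {lvl : I → ℕ} {δ : I → I → ℝ} {Cb : ℝ → ℝ}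

theorem row_sum_le (h : CountingEstimate n lvl δ Cb) {a q γ ε C₀ : ℝ} (ha : (n : ℝ) < a)
    (hCb : 0 ≤ Cb (a - n)) (hε : 0 < ε) (hC₀ : 0 ≤ C₀) (hγ : 0 < γ) (hq₁ : γ ≤ a / 2 - q)
    (hq₂ : γ ≤ q + a / 2 - n) (ν : I) {u : I → ℝ}
    (hu : ∀ μ, u μ ≠ 0 →
      ε ≤ δ ν μ ∧ |u μ| ≤ C₀ * 2 ^ (-(a / 2) * |(lvl ν : ℝ) - lvl μ|) * δ ν μ ^ (-a)) :
    ∑' μ, ENNReal.ofReal |u μ| * ENNReal.ofReal (2 ^ (-(q * lvl μ))) ≤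
      ENNReal.ofReal (C₀ * Cb (a - n) * ε ^ (-(a - n)) *
        (∑' z : ℤ, (2 : ℝ) ^ (-γ * |(z : ℝ)|)) * 2 ^ (-(q * lvl ν))) := by
  set L : ℝ := (lvl ν : ℝ)
  refine (h.tsum_le (sub_pos.2 ha) hε hγ ν
    (g := fun m => C₀ * 2 ^ (-(a / 2) * |(m : ℝ) - L| - q * m))
    (K := C₀ * Cb (a - n) * ε ^ (-(a - n)) * 2 ^ (-(q * L))) (fun m => by positivity)
    (fun m => ?_) (fun μ hμ => ?_)).trans_eq ?_
  · calc C₀ * 2 ^ (-(a / 2) * |(m : ℝ) - L| - q * m) *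
          (Cb (a - n) * ε ^ (-(a - n)) * 2 ^ ((n : ℝ) * max 0 ((m : ℝ) - L)))
        = C₀ * Cb (a - n) * ε ^ (-(a - n)) *
            2 ^ (-(a / 2) * |(m : ℝ) - L| - q * m + n * max 0 ((m : ℝ) - L)) := by
          rw [Real.rpow_add two_pos]; ring
      _ ≤ C₀ * Cb (a - n) * ε ^ (-(a - n)) * 2 ^ (-(q * L) - γ * |(m : ℝ) - L|) := by
          gcongr
          · exact one_le_two
          · exact level_exponent_le hq₁ hq₂
      _ = C₀ * Cb (a - n) * ε ^ (-(a - n)) * 2 ^ (-(q * L)) * 2 ^ (-γ * |(m : ℝ) - L|) := by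
          rw [mul_assoc _ (2 ^ _), ← Real.rpow_add two_pos]; ring_nf
  · have hu0 : u μ ≠ 0 := by rintro h0; simp [h0] at hμ
    obtain ⟨hfar, hdecay⟩ := hu μ hu0
    refine ⟨hfar, ?_⟩
    rw [← ENNReal.ofReal_mul (abs_nonneg _)]
    refine ENNReal.ofReal_le_ofReal ?_
    calc |u μ| * 2 ^ (-(q * lvl μ))
        ≤ C₀ * 2 ^ (-(a / 2) * |L - lvl μ|) * δ ν μ ^ (-a) * 2 ^ (-(q * lvl μ)) := by gcongr
      _ = _ := by
          rw [abs_sub_comm, sub_eq_add_neg _ (q * _), Real.rpow_add two_pos]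
          ring_nf
  · rw [← ENNReal.ofReal_mul' (tsum_nonneg fun z => by positivity)]
    ring_nf

theorem column_sum_le (h : CountingEstimate n lvl δ Cb) (hδ : ∀ ν μ, δ ν μ = δ μ ν)
    {a σ q γ ε C₀ K : ℝ} (hσ : 0 ≤ σ) (ha : n + 2 * σ < a) (hCb : 0 ≤ Cb (a - 2 * σ - n))
    (hε : 0 < ε) (hC₀ : 0 ≤ C₀) (hK : 0 ≤ K) (hγ : 0 < γ) (hq₁ : γ ≤ a / 2 - q)
    (hq₂ : γ ≤ q + a / 2 - (2 * σ + n)) (Λ : Set I) (ℓ : I → ℕ) (μ : I) {u : I → ℝ}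
    (hu : ∀ l ∈ Λ, u l ≠ 0 →
      ε ≤ δ l μ ∧ ε * 2 ^ ((lvl l : ℝ) - ℓ l) ≤ 2 ^ (max 0 ((lvl l : ℝ) - lvl μ)) * δ l μ ∧
        |u l| ≤ C₀ * 2 ^ (-(a / 2) * |(lvl l : ℝ) - lvl μ|) * δ l μ ^ (-a)) :
    ∑' l : Λ, ENNReal.ofReal (2 ^ (2 * ((lvl l : ℝ) - ℓ l) * σ)) *
        ENNReal.ofReal (K * 2 ^ (-(q * lvl l))) * ENNReal.ofReal |u l| ≤
      ENNReal.ofReal (K * C₀ * ε ^ (-(2 * σ)) * Cb (a - 2 * σ - n) * ε ^ (-(a - 2 * σ - n)) *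
        (∑' z : ℤ, (2 : ℝ) ^ (-γ * |(z : ℝ)|)) * 2 ^ (-(q * lvl μ))) := by
  have hb : 0 < a - 2 * σ - n := by linarith only [ha]
  set c : ℝ := 2 * σ
  set K' : ℝ := K * C₀ * ε ^ (-c)
  set M : ℝ := (lvl μ : ℝ) with hM
  rw [tsum_subtype Λ fun l => ENNReal.ofReal (2 ^ (2 * ((lvl l : ℝ) - ℓ l) * σ)) *
    ENNReal.ofReal (K * 2 ^ (-(q * lvl l))) * ENNReal.ofReal |u l|]
  refine (h.tsum_le hb hε hγ μ
    (g := fun L => K' * 2 ^ (-(a / 2) * |(L : ℝ) - M| - q * L + c * max 0 ((L : ℝ) - M)))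
    (K := K' * Cb (a - c - n) * ε ^ (-(a - c - n)) * 2 ^ (-(q * M))) (fun L => by positivity)
    (fun L => ?_) (fun l hl => ?_)).trans_eq ?_
  · calc K' * 2 ^ (-(a / 2) * |(L : ℝ) - M| - q * L + c * max 0 ((L : ℝ) - M)) *
          (Cb (a - c - n) * ε ^ (-(a - c - n)) * 2 ^ ((n : ℝ) * max 0 ((L : ℝ) - M)))
        = K' * Cb (a - c - n) * ε ^ (-(a - c - n)) *
            2 ^ (-(a / 2) * |(L : ℝ) - M| - q * L + (c + n) * max 0 ((L : ℝ) - M)) := by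
          rw [add_mul, ← add_assoc]; simp only [Real.rpow_add two_pos]; ring
      _ ≤ K' * Cb (a - c - n) * ε ^ (-(a - c - n)) * 2 ^ (-(q * M) - γ * |(L : ℝ) - M|) := by
          gcongr
          · exact one_le_two
          · exact level_exponent_le hq₁ hq₂
      _ = _ := by rw [mul_assoc _ (2 ^ _), ← Real.rpow_add two_pos, ← hM]; ring_nf
  · have hlΛ : l ∈ Λ := by by_contra hl'; simp [hl'] at hl
    have hu0 : u l ≠ 0 := by rintro h0; simp [hlΛ, h0] at hl
    obtain ⟨hfar, hscale, hdecay⟩ := hu l hlΛ hu0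
    have hδpos : 0 < δ l μ := hε.trans_le hfar
    rw [hδ μ l, Set.indicator_of_mem hlΛ, ← ENNReal.ofReal_mul (by positivity),
      ← ENNReal.ofReal_mul (by positivity)]
    refine ⟨hfar, ENNReal.ofReal_le_ofReal ?_⟩
    calc 2 ^ (2 * ((lvl l : ℝ) - ℓ l) * σ) * (K * 2 ^ (-(q * lvl l))) * |u l|
        ≤ 2 ^ (c * max 0 ((lvl l : ℝ) - M)) * δ l μ ^ c * ε ^ (-c) * (K * 2 ^ (-(q * lvl l))) *
            (C₀ * 2 ^ (-(a / 2) * |(lvl l : ℝ) - M|) * δ l μ ^ (-a)) := by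
          gcongr
          rw [show 2 * ((lvl l : ℝ) - ℓ l) * σ = c * ((lvl l : ℝ) - ℓ l) by ring]
          exact two_rpow_mul_le_of_scaled_le hε (by positivity) hscale
      _ = _ := by
        rw [show -((n : ℝ) + (a - c - n)) = c + -a by ring, Real.rpow_add hδpos]
        simp only [K', Real.rpow_add two_pos, Real.rpow_sub two_pos, Real.rpow_neg zero_le_two]
        ring
  · rw [← ENNReal.ofReal_mul' (tsum_nonneg fun z => by positivity)]
    ring_nf

theorem far_field_bound (h : CountingEstimate n lvl δ Cb) (hδ : ∀ ν μ, δ ν μ = δ μ ν)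
    (hCb : ∀ b, 0 < Cb b) {t s p ε C₀ : ℝ} (hst : 0 < s + t) (hsp : s < p) (hε : 0 < ε)
    (hC₀ : 0 < C₀) (Λ : Set I) (ℓ : I → ℕ) (F : I → I → ℝ)
    (hF : ∀ l ∈ Λ, ∀ μ, F l μ ≠ 0 →
      ε ≤ δ l μ ∧ ε * 2 ^ ((lvl l : ℝ) - ℓ l) ≤ 2 ^ (max 0 ((lvl l : ℝ) - lvl μ)) * δ l μ ∧
        |F l μ| ≤ C₀ * 2 ^ (-(((n : ℝ) + 2 * t + 2 * p) / 2) * |(lvl l : ℝ) - lvl μ|) *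
          δ l μ ^ (-((n : ℝ) + 2 * t + 2 * p))) :
    ∃ C : ℝ, 0 < C ∧ ∀ x : I → ℝ≥0∞,
      ∑' l : Λ, ENNReal.ofReal (2 ^ (2 * ((lvl l : ℝ) - ℓ l) * (s + t))) *
          (∑' μ, ENNReal.ofReal |F l μ| * x μ) ^ 2 ≤ ENNReal.ofReal C * ∑' μ, x μ ^ 2 := by
  set a : ℝ := (n : ℝ) + 2 * t + 2 * p with ha
  set q : ℝ := (n : ℝ) / 2 + s + t with hq
  set S : ℝ := ∑' z : ℤ, (2 : ℝ) ^ (-(p - s) * |(z : ℝ)|)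
  have hS : 0 < S := (summable_two_rpow_neg_mul_abs (sub_pos.2 hsp)).tsum_pos
    (fun z => by positivity) 0 (by positivity)
  set K : ℝ := C₀ * Cb (a - n) * ε ^ (-(a - n)) * S
  have hK : 0 < K := by have := hCb (a - n); positivity
  have hrow : ∀ l : Λ, ∑' μ, ENNReal.ofReal |F l μ| * ENNReal.ofReal (2 ^ (-(q * lvl μ))) ≤
      ENNReal.ofReal (K * 2 ^ (-(q * lvl l.1))) := fun l =>
    h.row_sum_le (by linarith) (hCb _).le hε hC₀.le (sub_pos.2 hsp) (by linarith) (by linarith) l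
      fun μ hFμ => ⟨(hF l l.2 μ hFμ).1, (hF l l.2 μ hFμ).2.2⟩
  set C : ℝ := K * C₀ * ε ^ (-(2 * (s + t))) * Cb (a - 2 * (s + t) - n) *
    ε ^ (-(a - 2 * (s + t) - n)) * S
  have hC : 0 < C := by have := hCb (a - 2 * (s + t) - n); positivity
  refine ⟨C, hC, ENNReal.schur_test _ _ _ _ _ (fun μ => (ENNReal.ofReal_pos.2 (by positivity)).ne')
      (fun μ => ENNReal.ofReal_ne_top) hrow fun μ => ?_⟩
  exact (h.column_sum_le hδ (by linarith) (by linarith) (hCb _).le hε hC₀.le hK.le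
    (sub_pos.2 hsp) (by linarith) (by linarith) Λ ℓ μ fun l hl => hF l hl μ).trans_eq
    (ENNReal.ofReal_mul hC.le)

end CountingEstimate

theorem far_field_interactions_general
    (n N : ℕ)
    (t s p : ℝ) (hst : 0 < s + t) (hsp : s < p)
    {I : Type*} [Countable I] (lvl : I → ℕ)
    (Ω : I → Set (EuclideanSpace ℝ (Fin N)))
    (Cb : ℝ → ℝ)
    (hcount : ∀ b : ℝ, 0 < b → ∀ ν : I, ∀ m : ℕ, ∀ R : ℝ, 0 < R →
      ∑' μ : {μ : I // lvl μ = m ∧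
          R ≤ (2 : ℝ) ^ (min (lvl ν) (lvl μ)) * setDist (Ω ν) (Ω μ)},
        ENNReal.ofReal
          (((2 : ℝ) ^ (min (lvl ν) (lvl μ.1)) * setDist (Ω ν) (Ω μ.1)) ^ (-((n : ℝ) + b)))
        ≤ ENNReal.ofReal
            (Cb b * R ^ (-b) * 2 ^ ((n : ℝ) * max 0 ((m : ℝ) - (lvl ν : ℝ)))))
    (Λc : Set I) (ℓ : I → ℕ) (hℓ : ∀ l ∈ Λc, ℓ l ≤ lvl l)
    (ε C₀ : ℝ) (hε : 0 < ε) (hC₀ : 0 < C₀)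
    (F : I → I → ℝ)
    (hF0 : ∀ l ∈ Λc, ∀ μ : I,
      setDist (Ω l) (Ω μ) < ε * max ((2 : ℝ) ^ (-(ℓ l : ℝ))) ((2 : ℝ) ^ (-(lvl μ : ℝ))) →
      F l μ = 0)
    (hFbd : ∀ l ∈ Λc, ∀ μ : I,
      ε * max ((2 : ℝ) ^ (-(ℓ l : ℝ))) ((2 : ℝ) ^ (-(lvl μ : ℝ))) ≤ setDist (Ω l) (Ω μ) →
      |F l μ| ≤ C₀ * ((2 : ℝ) ^ (-(|(lvl l : ℝ) - (lvl μ : ℝ)| / 2)) /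
          ((2 : ℝ) ^ (min (lvl l) (lvl μ)) * setDist (Ω l) (Ω μ)))
            ^ ((n : ℝ) + 2 * t + 2 * p)) :
    ∃ C : ℝ, 0 < C ∧ ∀ v : I → ℝ, Summable (fun μ => v μ ^ 2) →
      ∑' l : Λc,
          ENNReal.ofReal ((2 : ℝ) ^ (2 * ((lvl l.1 : ℝ) - (ℓ l.1 : ℝ)) * (s + t))) *
            (∑' μ : I, ENNReal.ofReal (|F l.1 μ| * |v μ|)) ^ 2
        ≤ ENNReal.ofReal C * ∑' μ : I, ENNReal.ofReal (v μ ^ 2) := by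
  set δ : I → I → ℝ := fun ν μ => (2 : ℝ) ^ (min (lvl ν) (lvl μ)) * setDist (Ω ν) (Ω μ)
  -- enlarging `Cb` keeps the counting estimate and makes every constant below positive
  have hδ : CountingEstimate n lvl δ fun b => max (Cb b) 1 :=
    CountingEstimate.mono hcount fun b => le_max_left _ _
  obtain ⟨C, hC, hbound⟩ := hδ.far_field_bound
    (fun ν μ => by simp only [δ, min_comm, setDist_comm]) (fun b => lt_max_of_lt_right one_pos)
    hst hsp hε hC₀ Λc ℓ F fun l hl μ hF => by
      have hfar := not_lt.1 (mt (hF0 l hl μ) hF)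
      exact far_entry_bounds (hℓ l hl) hε hfar (hFbd l hl μ hfar)
  refine ⟨C, hC, fun v _ => ?_⟩
  simpa only [ENNReal.ofReal_mul (abs_nonneg _), ← ENNReal.ofReal_pow (abs_nonneg _), sq_abs]
    using hbound fun μ => ENNReal.ofReal |v μ|

/-- Far-field interactions (Lemma 6.4).  With `δ(ν,μ) = 2^{min(|ν|,|μ|)} dist(Ω_ν, Ω_μ)`,
assume the counting estimate
`Σ_{μ : |μ| = m, δ(ν,μ) ≥ R} δ(ν,μ)^{−(n+β)} ≤ C_β R^{−β} 2^{n max(0, m−|ν|)}`,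
and let `F` vanish whenever `dist(Ω_λ, Ω_μ) < ε max(2^{−ℓ_λ}, 2^{−|μ|})` and obey the
Calderón–Zygmund-type decay `|F_{λμ}| ≤ C₀ (2^{−||λ|−|μ||/2}/δ(λ,μ))^{n+2t+2p}` otherwise.
Then there is a constant `C` with
`Σ_{λ∈Λᶜ} 2^{2(|λ|−ℓ_λ)(s+t)} (Σ_μ |F_{λμ}| |v_μ|)² ≤ C Σ_μ |v_μ|²` for all `v ∈ ℓ²`.
(All sums of nonnegative terms are interpreted in `[0,∞]`.) -/
theorem far_field_interactions
    (n N : ℕ) (hn : 1 ≤ n) (hN : 1 ≤ N)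
    (t s p : ℝ) (hst : 0 < s + t) (hpt : 0 < p + t) (hsp : s < p)
    {I : Type*} [Countable I] (lvl : I → ℕ)
    (Ω : I → Set (EuclideanSpace ℝ (Fin N)))
    (hΩne : ∀ l, (Ω l).Nonempty) (hΩbdd : ∀ l, Bornology.IsBounded (Ω l))
    (Cb : ℝ → ℝ)
    (hcount : ∀ b : ℝ, 0 < b → ∀ ν : I, ∀ m : ℕ, ∀ R : ℝ, 0 < R →
      ∑' μ : {μ : I // lvl μ = m ∧
          R ≤ (2 : ℝ) ^ (min (lvl ν) (lvl μ)) * setDist (Ω ν) (Ω μ)},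
        ENNReal.ofReal
          (((2 : ℝ) ^ (min (lvl ν) (lvl μ.1)) * setDist (Ω ν) (Ω μ.1)) ^ (-((n : ℝ) + b)))
        ≤ ENNReal.ofReal
            (Cb b * R ^ (-b) * 2 ^ ((n : ℝ) * max 0 ((m : ℝ) - (lvl ν : ℝ)))))
    (Λc : Set I) (ℓ : I → ℕ) (hℓ : ∀ l ∈ Λc, ℓ l ≤ lvl l)
    (ε C₀ : ℝ) (hε : 0 < ε) (hC₀ : 0 < C₀)
    (F : I → I → ℝ)
    (hF0 : ∀ l ∈ Λc, ∀ μ : I,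
      setDist (Ω l) (Ω μ) < ε * max ((2 : ℝ) ^ (-(ℓ l : ℝ))) ((2 : ℝ) ^ (-(lvl μ : ℝ))) →
      F l μ = 0)
    (hFbd : ∀ l ∈ Λc, ∀ μ : I,
      ε * max ((2 : ℝ) ^ (-(ℓ l : ℝ))) ((2 : ℝ) ^ (-(lvl μ : ℝ))) ≤ setDist (Ω l) (Ω μ) →
      |F l μ| ≤ C₀ * ((2 : ℝ) ^ (-(|(lvl l : ℝ) - (lvl μ : ℝ)| / 2)) /
          ((2 : ℝ) ^ (min (lvl l) (lvl μ)) * setDist (Ω l) (Ω μ)))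
            ^ ((n : ℝ) + 2 * t + 2 * p)) :
    ∃ C : ℝ, 0 < C ∧ ∀ v : I → ℝ, Summable (fun μ => v μ ^ 2) →
      ∑' l : Λc,
          ENNReal.ofReal ((2 : ℝ) ^ (2 * ((lvl l.1 : ℝ) - (ℓ l.1 : ℝ)) * (s + t))) *
            (∑' μ : I, ENNReal.ofReal (|F l.1 μ| * |v μ|)) ^ 2
        ≤ ENNReal.ofReal C * ∑' μ : I, ENNReal.ofReal (v μ ^ 2) :=
  far_field_interactions_general n N t s p hst hsp lvl Ω Cb hcount Λc ℓ hℓ ε C₀ hε hC₀ F hF0 hFbd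
end
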